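/- arXiv:2509.22428 — 12 statements merged into one kernel-verified Lean document; each statement's English description precedes it below -/
import Mathlib

section
/- Fix a privacy mechanism P_{Y|X} from a finite alphabet 𝒳 to a finite output alphabet 𝒴 and an output symbol y ∈ 𝒴. The pointwise maximal leakage to y is convex in the input distribution: for any two full-support distributions P_X, Q_X on 𝒳 such that P_Y(y) > 0 and Q_Y(y) > 0 (where P_Y = P_{Y|X} ∘ P_X and Q_Y = P_{Y|X} ∘ Q_X), and any λ ∈ [0,1], one has ℓ_{λP_X + (1−λ)Q_X}(X→y) ≤ λ·ℓ_{P_X}(X→y) + (1−λ)·ℓ_{Q_X}(X→y). -/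
open Finset Real

/-- A full-support probability distribution on a finite alphabet. -/
def FullSupport {X : Type*} [Fintype X] (p : X → ℝ) : Prop :=
  (∀ x, 0 < p x) ∧ ∑ x, p x = 1

/-- A privacy mechanism: a row-stochastic kernel. -/
def IsMech {X Y : Type*} [Fintype Y] (W : X → Y → ℝ) : Prop :=
  (∀ x y, 0 ≤ W x y) ∧ ∀ x, ∑ y, W x y = 1

/-- The output distribution `P_Y = P_{Y|X} ∘ P_X`. -/
noncomputable def outDist {X Y : Type*} [Fintype X] (W : X → Y → ℝ) (p : X → ℝ) (y : Y) : ℝ :=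
  ∑ x, p x * W x y

/-- Pointwise maximal leakage to an outcome `y`. -/
noncomputable def leak {X Y : Type*} [Fintype X] [Nonempty X] (W : X → Y → ℝ) (p : X → ℝ)
    (y : Y) : ℝ :=
  Real.log ((⨆ x, W x y) / outDist W p y)

/-- Pointwise maximal leakage to `y` is convex in the input distribution. -/
theorem stmt0 {X Y : Type*} [Fintype X] [Fintype Y] [Nonempty X]
    (W : X → Y → ℝ) (hW : IsMech W) (y : Y)
    (P Q : X → ℝ) (hP : FullSupport P) (hQ : FullSupport Q)
    (hPy : 0 < outDist W P y) (hQy : 0 < outDist W Q y)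
    (lam : ℝ) (hlam0 : 0 ≤ lam) (hlam1 : lam ≤ 1) :
    leak W (fun x => lam * P x + (1 - lam) * Q x) y ≤
      lam * leak W P y + (1 - lam) * leak W Q y := by
  -- the mixture output distribution is the mixture of output distributions
  have hmix : outDist W (fun x => lam * P x + (1 - lam) * Q x) y
      = lam * outDist W P y + (1 - lam) * outDist W Q y := by
    simp only [outDist, Finset.mul_sum, ← Finset.sum_add_distrib]
    exact Finset.sum_congr rfl fun x _ => by ring
  have hmixpos : 0 < outDist W (fun x => lam * P x + (1 - lam) * Q x) y := by
    rw [hmix]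
    rcases eq_or_lt_of_le hlam0 with h | h
    · simp [← h, hQy]
    · have := mul_nonneg (by linarith : (0:ℝ) ≤ 1 - lam) hQy.le
      nlinarith
  -- the sup is positive
  have hM : 0 < ⨆ x, W x y := by
    by_contra h
    push_neg at h
    have hle : ∀ x, W x y ≤ 0 := fun x =>
      le_trans (le_ciSup (f := fun x => W x y) (Set.Finite.bddAbove (Set.finite_range _)) x) h
    have : outDist W P y ≤ 0 :=
      Finset.sum_nonpos fun x _ => mul_nonpos_of_nonneg_of_nonpos (hP.1 x).le (hle x)
    linarith
  -- rewrite leaks as differences of logs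
  have hrw : ∀ p : X → ℝ, 0 < outDist W p y →
      leak W p y = Real.log (⨆ x, W x y) - Real.log (outDist W p y) := by
    intro p hp
    rw [leak, Real.log_div hM.ne' hp.ne']
  rw [hrw _ hmixpos, hrw _ hPy, hrw _ hQy]
  have hconc : lam * Real.log (outDist W P y) + (1 - lam) * Real.log (outDist W Q y)
      ≤ Real.log (outDist W (fun x => lam * P x + (1 - lam) * Q x) y) := by
    rw [hmix]
    have := strictConcaveOn_log_Ioi.concaveOn.2 (Set.mem_Ioi.mpr hPy)
      (Set.mem_Ioi.mpr hQy) hlam0 (by linarith : (0:ℝ) ≤ 1 - lam) (by ring)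
    simpa using this
  nlinarith [hconc]
end

section
/- Fix a privacy mechanism P_{Y|X} from a finite alphabet 𝒳 to a finite output alphabet 𝒴. The quantity ε_min(P_{Y|X}, P_X) is convex as a function of the input distribution on the set of full-support distributions: for any two full-support distributions P_X, Q_X on 𝒳 and any λ ∈ [0,1], ε_min(P_{Y|X}, λP_X + (1−λ)Q_X) ≤ λ·ε_min(P_{Y|X}, P_X) + (1−λ)·ε_min(P_{Y|X}, Q_X). -/
open Finset Real

/-- `ε_min`: the maximal leakage over outputs with positive probability. -/
noncomputable def epsMin {X Y : Type*} [Fintype X] [Nonempty X] (W : X → Y → ℝ)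
    (p : X → ℝ) : ℝ :=
  sSup {r : ℝ | ∃ y, 0 < outDist W p y ∧ r = leak W p y}

lemma out_le_sup {X Y : Type*} [Fintype X] [Nonempty X] (W : X → Y → ℝ)
    (hW : ∀ x y, 0 ≤ W x y) (p : X → ℝ) (hp : ∀ x, 0 ≤ p x) (hs : ∑ x, p x = 1) (y : Y) :
    outDist W p y ≤ ⨆ x, W x y := by
  have hbdd : BddAbove (Set.range (fun x => W x y)) :=
    (Set.finite_range _).bddAbove
  calc outDist W p y = ∑ x, p x * W x y := rfl
    _ ≤ ∑ x, p x * (⨆ x, W x y) := by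
        apply Finset.sum_le_sum
        intro x _
        exact mul_le_mul_of_nonneg_left (le_ciSup hbdd x) (hp x)
    _ = ⨆ x, W x y := by rw [← Finset.sum_mul, hs, one_mul]

lemma bddAbove_S {X Y : Type*} [Fintype X] [Fintype Y] [Nonempty X] (W : X → Y → ℝ)
    (p : X → ℝ) : BddAbove {r : ℝ | ∃ y, 0 < outDist W p y ∧ r = leak W p y} := by
  apply Set.Finite.bddAbove
  apply (Set.finite_range (leak W p)).subset
  rintro r ⟨y, _, rfl⟩
  exact ⟨y, rfl⟩

lemma leak_le_epsMin {X Y : Type*} [Fintype X] [Fintype Y] [Nonempty X] (W : X → Y → ℝ)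
    (p : X → ℝ) (y : Y) (hy : 0 < outDist W p y) : leak W p y ≤ epsMin W p :=
  le_csSup (bddAbove_S W p) ⟨y, hy, rfl⟩

lemma leak_nonneg {X Y : Type*} [Fintype X] [Nonempty X] (W : X → Y → ℝ)
    (hW : ∀ x y, 0 ≤ W x y) (p : X → ℝ) (hp : ∀ x, 0 ≤ p x) (hs : ∑ x, p x = 1)
    (y : Y) (hy : 0 < outDist W p y) : 0 ≤ leak W p y := by
  apply Real.log_nonneg
  rw [le_div_iff₀ hy, one_mul]
  exact out_le_sup W hW p hp hs y

lemma epsMin_nonneg {X Y : Type*} [Fintype X] [Nonempty X] (W : X → Y → ℝ)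
    (hW : ∀ x y, 0 ≤ W x y) (p : X → ℝ) (hp : ∀ x, 0 ≤ p x) (hs : ∑ x, p x = 1) :
    0 ≤ epsMin W p := by
  apply Real.sSup_nonneg
  rintro r ⟨y, hy, rfl⟩
  exact leak_nonneg W hW p hp hs y hy

/-- `ε_min` is convex in the input distribution on full-support distributions. -/
theorem stmt1 {X Y : Type*} [Fintype X] [Fintype Y] [Nonempty X]
    (W : X → Y → ℝ) (hW : IsMech W)
    (P Q : X → ℝ) (hP : FullSupport P) (hQ : FullSupport Q)
    (lam : ℝ) (hlam0 : 0 ≤ lam) (hlam1 : lam ≤ 1) :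
    epsMin W (fun x => lam * P x + (1 - lam) * Q x) ≤
      lam * epsMin W P + (1 - lam) * epsMin W Q := by
  obtain ⟨hWnn, hWrow⟩ := hW
  obtain ⟨hPpos, hPsum⟩ := hP
  obtain ⟨hQpos, hQsum⟩ := hQ
  have hμ : 0 ≤ 1 - lam := by linarith
  have hEP : 0 ≤ epsMin W P :=
    epsMin_nonneg W hWnn P (fun x => (hPpos x).le) hPsum
  have hEQ : 0 ≤ epsMin W Q :=
    epsMin_nonneg W hWnn Q (fun x => (hQpos x).le) hQsum
  apply Real.sSup_le _ (by positivity)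
  rintro r ⟨y, hy, rfl⟩
  set mix : X → ℝ := fun x => lam * P x + (1 - lam) * Q x with hmix
  -- decompose the output distribution
  have hout : outDist W mix y = lam * outDist W P y + (1 - lam) * outDist W Q y := by
    simp only [outDist, hmix, add_mul, Finset.sum_add_distrib, Finset.mul_sum, mul_assoc]
  -- some x with W x y > 0
  obtain ⟨x0, hx0⟩ : ∃ x, 0 < W x y := by
    by_contra h
    push_neg at h
    have : outDist W mix y = 0 := by
      apply Finset.sum_eq_zero
      intro x _
      have := le_antisymm (h x) (hWnn x y)
      rw [this, mul_zero]
    linarith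
  have ha : 0 < outDist W P y :=
    Finset.sum_pos' (fun x _ => mul_nonneg (hPpos x).le (hWnn x y))
      ⟨x0, Finset.mem_univ x0, mul_pos (hPpos x0) hx0⟩
  have hb : 0 < outDist W Q y :=
    Finset.sum_pos' (fun x _ => mul_nonneg (hQpos x).le (hWnn x y))
      ⟨x0, Finset.mem_univ x0, mul_pos (hQpos x0) hx0⟩
  have hbdd : BddAbove (Set.range (fun x => W x y)) := (Set.finite_range _).bddAbove
  have hM : 0 < ⨆ x, W x y := lt_of_lt_of_le hx0 (le_ciSup hbdd x0)
  -- concavity of log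
  have hconc := strictConcaveOn_log_Ioi.concaveOn.2 (Set.mem_Ioi.mpr ha)
    (Set.mem_Ioi.mpr hb) hlam0 hμ (by ring)
  simp only [smul_eq_mul] at hconc
  have hlog : leak W mix y ≤ lam * leak W P y + (1 - lam) * leak W Q y := by
    unfold leak
    rw [Real.log_div hM.ne' hy.ne',
        Real.log_div hM.ne' ha.ne', Real.log_div hM.ne' hb.ne', hout]
    nlinarith [hconc]
  calc leak W mix y ≤ lam * leak W P y + (1 - lam) * leak W Q y := hlog
    _ ≤ lam * epsMin W P + (1 - lam) * epsMin W Q := by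
        have h1 := leak_le_epsMin W P y ha
        have h2 := leak_le_epsMin W Q y hb
        nlinarith
end

section
/- Let π^{(1)}, …, π^{(k)} be full-support probability distributions on a finite alphabet 𝒳 and let 𝒫 be their convex hull (a convex polytope of full-support distributions). Then for any privacy mechanism P_{Y|X} and any ε ≥ 0: ε_min(P_{Y|X}, Q_X) ≤ ε holds for every Q_X ∈ 𝒫 if and only if ε_min(P_{Y|X}, π^{(i)}) ≤ ε holds for every i ∈ {1,…,k}. Equivalently, the set of mechanisms satisfying ε-PML with respect to all distributions in 𝒫 equals the set of mechanisms satisfying ε-PML with respect to each extreme point π^{(i)}. -/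
open Finset Real

lemma ciSup_pos_of_out {X Y : Type*} [Fintype X] [Nonempty X] {W : X → Y → ℝ} {p : X → ℝ}
    {y : Y} (hWnn : ∀ x y, 0 ≤ W x y) (hpos : 0 < outDist W p y) (hp : ∀ x, 0 ≤ p x) :
    0 < ⨆ x, W x y := by
  have : ∃ x, 0 < p x * W x y := by
    by_contra h
    push_neg at h
    have : outDist W p y ≤ 0 := Finset.sum_nonpos (fun x _ => h x)
    linarith
  obtain ⟨x, hx⟩ := this
  have hWx : 0 < W x y := by
    rcases lt_or_ge 0 (W x y) with h | h
    · exact h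
    · nlinarith [hp x]
  calc 0 < W x y := hWx
    _ ≤ ⨆ x, W x y := le_ciSup (f := fun x => W x y) (Set.Finite.bddAbove (Set.finite_range _)) x

/-- key characterization -/
lemma epsMin_le_iff {X Y : Type*} [Fintype X] [Fintype Y] [Nonempty X]
    (W : X → Y → ℝ) (hW : IsMech W) (p : X → ℝ) (hp : ∀ x, 0 ≤ p x) (ε : ℝ) (hε : 0 ≤ ε) :
    epsMin W p ≤ ε ↔
      ∀ y, 0 < outDist W p y → (⨆ x, W x y) ≤ Real.exp ε * outDist W p y := by
  constructor
  · intro h y hy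
    have hmem : leak W p y ∈ {r : ℝ | ∃ y, 0 < outDist W p y ∧ r = leak W p y} :=
      ⟨y, hy, rfl⟩
    have hbdd : BddAbove {r : ℝ | ∃ y, 0 < outDist W p y ∧ r = leak W p y} := by
      apply Set.Finite.bddAbove
      apply Set.Finite.subset (Set.finite_range (leak W p))
      rintro r ⟨y, _, rfl⟩
      exact ⟨y, rfl⟩
    have hle : leak W p y ≤ ε := le_trans (le_csSup hbdd hmem) h
    have hsup : 0 < ⨆ x, W x y := ciSup_pos_of_out hW.1 hy hp
    have hdiv : 0 < (⨆ x, W x y) / outDist W p y := div_pos hsup hy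
    rw [leak, Real.log_le_iff_le_exp hdiv, div_le_iff₀ hy] at hle
    linarith [hle]
  · intro h
    apply Real.sSup_le _ hε
    rintro r ⟨y, hy, rfl⟩
    have hsup : 0 < ⨆ x, W x y := ciSup_pos_of_out hW.1 hy hp
    rw [leak, Real.log_le_iff_le_exp (div_pos hsup hy), div_le_iff₀ hy]
    linarith [h y hy]

/-- A mechanism satisfies `ε`-PML for all distributions in the convex hull of finitely
many full-support distributions iff it does so for each extreme point. -/
theorem stmt2 {X Y : Type*} [Fintype X] [Fintype Y] [Nonempty X]
    (k : ℕ) (hk : 0 < k) (pis : Fin k → X → ℝ) (hpis : ∀ i, FullSupport (pis i))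
    (W : X → Y → ℝ) (hW : IsMech W) (ε : ℝ) (hε : 0 ≤ ε) :
    (∀ Q ∈ convexHull ℝ (Set.range pis), epsMin W Q ≤ ε) ↔
      (∀ i, epsMin W (pis i) ≤ ε) := by
  constructor
  · intro h i
    exact h (pis i) (subset_convexHull ℝ _ ⟨i, rfl⟩)
  · intro h Q hQ
    rw [convexHull_range_eq_exists_affineCombination] at hQ
    obtain ⟨s, w, hw, hw1, hQeq⟩ := hQ
    rw [Finset.affineCombination_eq_linear_combination _ _ _ hw1] at hQeq
    have hQx : ∀ x, Q x = ∑ i ∈ s, w i * pis i x := by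
      intro x
      rw [← hQeq]
      simp [Finset.sum_apply]
    have hQnn : ∀ x, 0 ≤ Q x := by
      intro x
      rw [hQx]
      exact Finset.sum_nonneg fun i hi => mul_nonneg (hw i hi) ((hpis i).1 x).le
    have hout : ∀ y, outDist W Q y = ∑ i ∈ s, w i * outDist W (pis i) y := by
      intro y
      simp only [outDist, hQx, Finset.sum_mul, Finset.mul_sum]
      rw [Finset.sum_comm]
      congr 1; ext i; congr 1; ext x; ring
    rw [epsMin_le_iff W hW Q hQnn ε hε]
    intro y hy
    -- each component with positive outDist gives the bound; all have outDist > 0 or W·y = 0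
    by_cases hWy : ∃ x, 0 < W x y
    · obtain ⟨x0, hx0⟩ := hWy
      have hposi : ∀ i, 0 < outDist W (pis i) y := by
        intro i
        apply Finset.sum_pos' (fun x _ => mul_nonneg ((hpis i).1 x).le (hW.1 x y))
        exact ⟨x0, Finset.mem_univ x0, mul_pos ((hpis i).1 x0) hx0⟩
      have hbound : ∀ i, (⨆ x, W x y) ≤ Real.exp ε * outDist W (pis i) y := by
        intro i
        exact (epsMin_le_iff W hW (pis i) (fun x => ((hpis i).1 x).le) ε hε).mp (h i) y (hposi i)
      rw [hout]
      calc (⨆ x, W x y) = ∑ i ∈ s, w i * (⨆ x, W x y) := by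
            rw [← Finset.sum_mul, hw1, one_mul]
        _ ≤ ∑ i ∈ s, w i * (Real.exp ε * outDist W (pis i) y) := by
            apply Finset.sum_le_sum
            intro i hi
            exact mul_le_mul_of_nonneg_left (hbound i) (hw i hi)
        _ = Real.exp ε * ∑ i ∈ s, w i * outDist W (pis i) y := by
            rw [Finset.mul_sum]; congr 1; ext i; ring
    · exfalso
      push_neg at hWy
      have : outDist W Q y ≤ 0 := by
        apply Finset.sum_nonpos
        intro x _
        exact mul_nonpos_of_nonneg_of_nonpos (hQnn x) (hWy x)
      linarith
end

section
/- Let 𝒫 be a set of full-support probability distributions on a finite alphabet 𝒳, let P_{Y|X} be a privacy mechanism, and suppose the 𝒫-local leakage capacity satisfies C(P_{Y|X}, 𝒫) ≤ c for some real number c. Then ε_min(P_{Y|X}, ·) is e^c-Lipschitz on 𝒫 with respect to the ℓ1-distance: for any two distributions P_X, Q_X ∈ 𝒫, |ε_min(P_{Y|X}, P_X) − ε_min(P_{Y|X}, Q_X)| ≤ e^c · ||P_X − Q_X||₁. -/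
open Finset Real

/-- If the `𝒫`-local leakage capacity is at most `c`, then `ε_min` is `e^c`-Lipschitz
on `𝒫` w.r.t. the ℓ1-distance. -/
theorem stmt3 {X Y : Type*} [Fintype X] [Fintype Y] [Nonempty X]
    (distSet : Set (X → ℝ)) (hdistSet : ∀ p ∈ distSet, FullSupport p)
    (W : X → Y → ℝ) (hW : IsMech W)
    (c : ℝ) (hC : ∀ q ∈ distSet, epsMin W q ≤ c)
    (P Q : X → ℝ) (hP : P ∈ distSet) (hQ : Q ∈ distSet) :
    |epsMin W P - epsMin W Q| ≤ Real.exp c * ∑ x, |P x - Q x| := by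
  obtain ⟨hWnn, hWrow⟩ := hW
  set D := ∑ x, |P x - Q x| with hDdef
  have hD0 : 0 ≤ D := Finset.sum_nonneg fun x _ => abs_nonneg _
  have hbdd : ∀ y : Y, BddAbove (Set.range fun x => W x y) :=
    fun y => (Set.finite_range _).bddAbove
  have hMle : ∀ (x : X) (y : Y), W x y ≤ ⨆ x, W x y := fun x y => le_ciSup (hbdd y) x
  -- characterization of positivity of the output distribution
  have hchar : ∀ p : X → ℝ, (∀ x, 0 < p x) → ∀ y : Y,
      (0 < outDist W p y ↔ ∃ x, 0 < W x y) := by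
    intro p hp y
    constructor
    · intro h
      obtain ⟨x, _, hx⟩ := Finset.exists_ne_zero_of_sum_ne_zero (ne_of_gt h)
      refine ⟨x, ?_⟩
      rcases lt_or_eq_of_le (hWnn x y) with h' | h'
      · exact h'
      · exact absurd (by rw [← h', mul_zero]) hx
    · rintro ⟨x, hx⟩
      exact Finset.sum_pos' (fun x _ => mul_nonneg (hp x).le (hWnn x y))
        ⟨x, Finset.mem_univ x, mul_pos (hp x) hx⟩
  -- the sets whose sSup is epsMin
  have hSfin : ∀ p : X → ℝ,
      ({r : ℝ | ∃ y, 0 < outDist W p y ∧ r = leak W p y}).Finite := by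
    intro p
    apply (Set.finite_range (leak W p)).subset
    rintro r ⟨y, _, rfl⟩
    exact ⟨y, rfl⟩
  have hSbdd : ∀ p : X → ℝ,
      BddAbove {r : ℝ | ∃ y, 0 < outDist W p y ∧ r = leak W p y} :=
    fun p => (hSfin p).bddAbove
  -- nonemptiness
  have hSne : ∀ p ∈ distSet,
      ({r : ℝ | ∃ y, 0 < outDist W p y ∧ r = leak W p y}).Nonempty := by
    intro p hpmem
    obtain ⟨hp, hpsum⟩ := hdistSet p hpmem
    have hsum : ∑ y, outDist W p y = 1 := by
      unfold outDist
      rw [Finset.sum_comm]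
      calc ∑ x, ∑ y, p x * W x y = ∑ x, p x * ∑ y, W x y := by
            simp [Finset.mul_sum]
        _ = 1 := by simp [hWrow, hpsum]
    obtain ⟨y, _, hy⟩ := Finset.exists_ne_zero_of_sum_ne_zero (by rw [hsum]; norm_num)
    have hypos : 0 < outDist W p y :=
      lt_of_le_of_ne (Finset.sum_nonneg fun x _ => mul_nonneg (hp x).le (hWnn x y))
        (Ne.symm hy)
    exact ⟨leak W p y, y, hypos, rfl⟩
  -- each leak value is bounded by c
  have hleakle : ∀ p ∈ distSet, ∀ y : Y, 0 < outDist W p y → leak W p y ≤ c := by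
    intro p hpmem y hy
    exact le_trans (le_csSup (hSbdd p) ⟨y, hy, rfl⟩) (hC p hpmem)
  -- key pointwise estimate
  have key : ∀ p q : X → ℝ, (∀ x, 0 < p x) → (∀ x, 0 < q x) → ∀ y : Y,
      0 < outDist W p y → 0 < outDist W q y → leak W p y ≤ c →
      leak W p y - leak W q y ≤ Real.exp c * ∑ x, |p x - q x| := by
    intro p q hp hq y hop hoq hlc
    set M := ⨆ x, W x y with hMdef
    have hM0 : 0 < M := by
      obtain ⟨x, hx⟩ := (hchar p hp y).mp hop
      exact lt_of_lt_of_le hx (hMle x y)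
    have hlp : leak W p y = Real.log M - Real.log (outDist W p y) := by
      rw [leak, Real.log_div (ne_of_gt hM0) (ne_of_gt hop)]
    have hlq : leak W q y = Real.log M - Real.log (outDist W q y) := by
      rw [leak, Real.log_div (ne_of_gt hM0) (ne_of_gt hoq)]
    -- M / outDist p ≤ exp c
    have hMop : M ≤ Real.exp c * outDist W p y := by
      have h1 : Real.log (M / outDist W p y) ≤ c := by
        rw [← leak]; exact hlc
      have h2 : M / outDist W p y ≤ Real.exp c := by
        calc M / outDist W p y = Real.exp (Real.log (M / outDist W p y)) :=
              (Real.exp_log (div_pos hM0 hop)).symm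
          _ ≤ Real.exp c := Real.exp_le_exp.mpr h1
      calc M = (M / outDist W p y) * outDist W p y := by field_simp
        _ ≤ Real.exp c * outDist W p y := by
            exact mul_le_mul_of_nonneg_right h2 hop.le
    -- |outDist q - outDist p| bounded
    have hdiff : outDist W q y - outDist W p y ≤ M * ∑ x, |p x - q x| := by
      have : outDist W q y - outDist W p y = ∑ x, (q x - p x) * W x y := by
        unfold outDist
        rw [← Finset.sum_sub_distrib]
        congr 1; ext x; ring
      rw [this, Finset.mul_sum]
      apply Finset.sum_le_sum
      intro x _
      calc (q x - p x) * W x y ≤ |q x - p x| * W x y :=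
            mul_le_mul_of_nonneg_right (le_abs_self _) (hWnn x y)
        _ = |p x - q x| * W x y := by rw [abs_sub_comm]
        _ ≤ |p x - q x| * M := mul_le_mul_of_nonneg_left (hMle x y) (abs_nonneg _)
        _ = M * |p x - q x| := by ring
    -- main chain
    have hlog : Real.log (outDist W q y) - Real.log (outDist W p y)
        ≤ (outDist W q y - outDist W p y) / outDist W p y := by
      have h1 : Real.log (outDist W q y / outDist W p y)
          ≤ outDist W q y / outDist W p y - 1 :=
        Real.log_le_sub_one_of_pos (div_pos hoq hop)
      rw [Real.log_div (ne_of_gt hoq) (ne_of_gt hop)] at h1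
      calc Real.log (outDist W q y) - Real.log (outDist W p y)
          ≤ outDist W q y / outDist W p y - 1 := h1
        _ = (outDist W q y - outDist W p y) / outDist W p y := by field_simp
    have hchain : (outDist W q y - outDist W p y) / outDist W p y
        ≤ Real.exp c * ∑ x, |p x - q x| := by
      rw [div_le_iff₀ hop]
      calc outDist W q y - outDist W p y ≤ M * ∑ x, |p x - q x| := hdiff
        _ ≤ (Real.exp c * outDist W p y) * ∑ x, |p x - q x| :=
            mul_le_mul_of_nonneg_right hMop
              (Finset.sum_nonneg fun x _ => abs_nonneg _)
        _ = Real.exp c * (∑ x, |p x - q x|) * outDist W p y := by ring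
    calc leak W p y - leak W q y
        = Real.log (outDist W q y) - Real.log (outDist W p y) := by
          rw [hlp, hlq]; ring
      _ ≤ (outDist W q y - outDist W p y) / outDist W p y := hlog
      _ ≤ Real.exp c * ∑ x, |p x - q x| := hchain
  obtain ⟨hPpos, hPsum⟩ := hdistSet P hP
  obtain ⟨hQpos, hQsum⟩ := hdistSet Q hQ
  have hposiff : ∀ y : Y, (0 < outDist W P y ↔ 0 < outDist W Q y) := by
    intro y
    rw [hchar P hPpos y, hchar Q hQpos y]
  have hDsymm : ∑ x, |Q x - P x| = D := by
    rw [hDdef]; congr 1; ext x; rw [abs_sub_comm]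
  -- both directions
  have h1 : epsMin W P ≤ epsMin W Q + Real.exp c * D := by
    apply csSup_le (hSne P hP)
    rintro r ⟨y, hy, rfl⟩
    have hyQ : 0 < outDist W Q y := (hposiff y).mp hy
    have hk := key P Q hPpos hQpos y hy hyQ (hleakle P hP y hy)
    have hmem : leak W Q y ≤ epsMin W Q := le_csSup (hSbdd Q) ⟨y, hyQ, rfl⟩
    rw [← hDdef] at hk
    linarith
  have h2 : epsMin W Q ≤ epsMin W P + Real.exp c * D := by
    apply csSup_le (hSne Q hQ)
    rintro r ⟨y, hy, rfl⟩
    have hyP : 0 < outDist W P y := (hposiff y).mpr hy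
    have hk := key Q P hQpos hPpos y hy hyP (hleakle Q hQ y hy)
    rw [hDsymm] at hk
    have hmem : leak W P y ≤ epsMin W P := le_csSup (hSbdd P) ⟨y, hyP, rfl⟩
    linarith
  rw [abs_sub_le_iff]
  constructor <;> linarith
end

section
/- Intermediate step of the Lipschitz bound: let 𝒫 be a set of full-support distributions on a finite alphabet 𝒳, let P_{Y|X} be a privacy mechanism with C(P_{Y|X}, 𝒫) ≤ c for some real c, and let P_X, Q_X ∈ 𝒫 with output distributions P_Y and Q_Y. Then max over y with P_Y(y) > 0 of | log( Q_Y(y) / P_Y(y) ) | ≤ e^c · ||P_X − Q_X||₁. (For full-support P_X and Q_X, P_Y(y) > 0 if and only if Q_Y(y) > 0, so the ratio is well defined.) -/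
open Finset Real

lemma aux_bdd {X Y : Type*} [Fintype X] [Nonempty X] (W : X → Y → ℝ)
    (hWnn : ∀ x y, 0 ≤ W x y) (R : X → ℝ) (hR : ∀ x, 0 < R x) :
    BddAbove {r : ℝ | ∃ y, 0 < outDist W R y ∧ r = leak W R y} := by
  set m : ℝ := Finset.univ.inf' Finset.univ_nonempty R with hm
  have hmpos : 0 < m := by
    obtain ⟨x, -, hx⟩ := Finset.exists_mem_eq_inf' Finset.univ_nonempty R
    rw [hm, hx]; exact hR x
  refine ⟨Real.log (1 / m), ?_⟩
  rintro r ⟨y, hy, rfl⟩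
  obtain ⟨xm, -, hxm⟩ := Finset.exists_max_image Finset.univ (fun x => W x y)
    ⟨Classical.arbitrary X, Finset.mem_univ _⟩
  have hsup : (⨆ x, W x y) = W xm y :=
    le_antisymm (ciSup_le fun x => hxm x (Finset.mem_univ x))
      (le_ciSup (f := fun x => W x y) (Set.Finite.bddAbove (Set.finite_range _)) xm)
  have hspos : 0 < W xm y := by
    by_contra h
    push_neg at h
    have : outDist W R y = 0 := by
      apply Finset.sum_eq_zero
      intro x _
      have h1 : W x y ≤ 0 := le_trans (hxm x (Finset.mem_univ x)) h
      have : W x y = 0 := le_antisymm h1 (hWnn x y)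
      simp [this]
    linarith
  have hout : m * W xm y ≤ outDist W R y := by
    calc m * W xm y ≤ R xm * W xm y := by
          exact mul_le_mul_of_nonneg_right (Finset.inf'_le _ (Finset.mem_univ xm)) hspos.le
      _ ≤ outDist W R y :=
          Finset.single_le_sum (fun x _ => mul_nonneg (hR x).le (hWnn x y)) (Finset.mem_univ xm)
  unfold leak
  rw [hsup]
  apply Real.log_le_log (div_pos hspos hy)
  rw [div_le_div_iff₀ hy hmpos, one_mul]
  linarith [hout]

lemma key_bound {X Y : Type*} [Fintype X] [Fintype Y] [Nonempty X]
    (W : X → Y → ℝ) (hWnn : ∀ x y, 0 ≤ W x y)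
    (c : ℝ) (R : X → ℝ) (hR : ∀ x, 0 < R x) (hc : epsMin W R ≤ c)
    (y : Y) (hy : 0 < outDist W R y) (x : X) : W x y ≤ Real.exp c * outDist W R y := by
  have hleak : leak W R y ≤ c :=
    le_trans (le_csSup (aux_bdd W hWnn R hR) ⟨y, hy, rfl⟩) hc
  have hxle : W x y ≤ ⨆ x, W x y :=
    le_ciSup (f := fun x => W x y) (Set.Finite.bddAbove (Set.finite_range _)) x
  have hsup_pos : 0 < ⨆ x, W x y := by
    obtain ⟨x0, hx0⟩ : ∃ x0, 0 < R x0 * W x0 y := by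
      by_contra h
      push_neg at h
      have : outDist W R y ≤ 0 := Finset.sum_nonpos fun x _ => h x
      linarith
    have hw0 : 0 < W x0 y := by nlinarith [hR x0, hWnn x0 y]
    exact lt_of_lt_of_le hw0
      (le_ciSup (f := fun x => W x y) (Set.Finite.bddAbove (Set.finite_range _)) x0)
  have : (⨆ x, W x y) / outDist W R y ≤ Real.exp c := by
    rw [← Real.log_le_iff_le_exp (div_pos hsup_pos hy)]
    exact hleak
  calc W x y ≤ ⨆ x, W x y := hxle
    _ ≤ Real.exp c * outDist W R y := by
        rw [div_le_iff₀ hy] at this; linarith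

/-- Intermediate step of the Lipschitz bound: the log-ratio of output probabilities is
bounded by `e^c` times the ℓ1-distance of the inputs. -/
theorem stmt4 {X Y : Type*} [Fintype X] [Fintype Y] [Nonempty X]
    (distSet : Set (X → ℝ)) (hdistSet : ∀ p ∈ distSet, FullSupport p)
    (W : X → Y → ℝ) (hW : IsMech W)
    (c : ℝ) (hC : ∀ q ∈ distSet, epsMin W q ≤ c)
    (P Q : X → ℝ) (hP : P ∈ distSet) (hQ : Q ∈ distSet) :
    ∀ y, 0 < outDist W P y →
      |Real.log (outDist W Q y / outDist W P y)| ≤ Real.exp c * ∑ x, |P x - Q x| := by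
  intro y hPy
  obtain ⟨hPpos, -⟩ := hdistSet P hP
  obtain ⟨hQpos, -⟩ := hdistSet Q hQ
  obtain ⟨hWnn, -⟩ := hW
  set p := outDist W P y with hp
  set q := outDist W Q y with hq
  set L := ∑ x, |P x - Q x| with hL
  have hLnn : 0 ≤ L := Finset.sum_nonneg fun x _ => abs_nonneg _
  obtain ⟨x0, hx0⟩ : ∃ x0, 0 < W x0 y := by
    by_contra h; push_neg at h
    have : outDist W P y ≤ 0 :=
      Finset.sum_nonpos fun x _ => mul_nonpos_of_nonneg_of_nonpos (hPpos x).le (h x)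
    rw [← hp] at this; linarith
  have hQy : 0 < q := lt_of_lt_of_le (mul_pos (hQpos x0) hx0)
    (Finset.single_le_sum (fun x _ => mul_nonneg (hQpos x).le (hWnn x y)) (Finset.mem_univ x0))
  obtain ⟨xm, -, hxm⟩ := Finset.exists_max_image Finset.univ (fun x => W x y)
    ⟨x0, Finset.mem_univ x0⟩
  have hsP : W xm y ≤ Real.exp c * p := key_bound W hWnn c P hPpos (hC P hP) y hPy xm
  have hsQ : W xm y ≤ Real.exp c * q := key_bound W hWnn c Q hQpos (hC Q hQ) y hQy xm
  have hd : |q - p| ≤ W xm y * L := by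
    have heq : q - p = ∑ x, (Q x - P x) * W x y := by
      rw [hq, hp]
      simp only [outDist, sub_mul, Finset.sum_sub_distrib]
    rw [heq]
    calc |∑ x, (Q x - P x) * W x y| ≤ ∑ x, |(Q x - P x) * W x y| :=
          Finset.abs_sum_le_sum_abs _ _
      _ ≤ ∑ x, |P x - Q x| * W xm y := by
          apply Finset.sum_le_sum; intro x _
          rw [abs_mul, abs_of_nonneg (hWnn x y), abs_sub_comm]
          exact mul_le_mul_of_nonneg_left (hxm x (Finset.mem_univ x)) (abs_nonneg _)
      _ = W xm y * L := by rw [hL, ← Finset.sum_mul, mul_comm]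
  have hd1 : q - p ≤ W xm y * L := le_trans (le_abs_self _) hd
  have hd2 : p - q ≤ W xm y * L := by
    rw [abs_sub_comm] at hd; exact le_trans (le_abs_self _) hd
  rcases le_or_gt p q with hle | hlt
  · rw [abs_of_nonneg (Real.log_nonneg ((one_le_div hPy).mpr hle))]
    have h1 : Real.log (q / p) ≤ q / p - 1 := Real.log_le_sub_one_of_pos (div_pos hQy hPy)
    have h2 : q / p - 1 ≤ Real.exp c * L := by
      rw [div_sub_one hPy.ne', div_le_iff₀ hPy]
      calc q - p ≤ W xm y * L := hd1
        _ ≤ Real.exp c * p * L := mul_le_mul_of_nonneg_right hsP hLnn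
        _ = Real.exp c * L * p := by ring
    linarith
  · rw [abs_of_nonpos (Real.log_nonpos (div_nonneg hQy.le hPy.le) ((div_le_one hPy).mpr hlt.le)),
      ← Real.log_inv, inv_div]
    have h1 : Real.log (p / q) ≤ p / q - 1 := Real.log_le_sub_one_of_pos (div_pos hPy hQy)
    have h2 : p / q - 1 ≤ Real.exp c * L := by
      rw [div_sub_one hQy.ne', div_le_iff₀ hQy]
      calc p - q ≤ W xm y * L := hd2
        _ ≤ Real.exp c * q * L := mul_le_mul_of_nonneg_right hsQ hLnn
        _ = Real.exp c * L * q := by ring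
    linarith
end

section
/- Let P_X be a full-support distribution on a finite alphabet 𝒳 with p_min = min_{x∈𝒳} P_X(x), let 0 < β < 2·p_min, and let the mechanism P_{Y|X} satisfy ε-PML with respect to P_X, where ε ≤ −log p_min (so that (β/2)e^ε < 1). Then the local leakage sensitivity over the ℓ1-ball satisfies S_{P_X}(P_{Y|X}, B_β(P_X)) ≤ −log( 1 − (β/2)·e^ε ). -/
open Finset Real

/-- Bound on the local leakage sensitivity over the ℓ1-ball `B_β(P_X)`:
`S_{P_X}(P_{Y|X}, B_β(P_X)) ≤ -log(1 - (β/2)·e^ε)`. -/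
theorem stmt6 {X Y : Type*} [Fintype X] [Fintype Y] [Nonempty X]
    (P : X → ℝ) (hP : FullSupport P)
    (pmin : ℝ) (hpmin : pmin = ⨅ x, P x)
    (β : ℝ) (hβ0 : 0 < β) (hβ : β < 2 * pmin)
    (W : X → Y → ℝ) (hW : IsMech W)
    (ε : ℝ) (hPML : epsMin W P ≤ ε) (hε : ε ≤ -Real.log pmin) :
    ∀ Q : X → ℝ, FullSupport Q → (∑ x, |P x - Q x|) ≤ β →
      epsMin W Q - epsMin W P ≤ -Real.log (1 - β / 2 * Real.exp ε) := by
  intro Q hQ hQP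
  obtain ⟨hPpos, hPsum⟩ := hP
  obtain ⟨hQpos, hQsum⟩ := hQ
  obtain ⟨hW0, hW1⟩ := hW
  set S : Y → ℝ := fun y => ⨆ x, W x y with hSdef
  have hSle : ∀ x y, W x y ≤ S y := fun x y => le_ciSup (f := fun x => W x y) (Set.Finite.bddAbove (Set.finite_range _)) x
  have hS0 : ∀ y, 0 ≤ S y := fun y => le_trans (hW0 (Classical.arbitrary X) y) (hSle _ y)
  -- pmin > 0
  obtain ⟨x0, hx0⟩ := Finite.exists_min P
  have hpmin0 : 0 < pmin := by
    rw [hpmin]; exact lt_of_lt_of_le (hPpos x0) (le_ciInf hx0)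
  -- c < 1
  have hexp : Real.exp ε ≤ 1 / pmin := by
    have := Real.exp_le_exp.2 hε
    rwa [Real.exp_neg, Real.exp_log hpmin0, ← one_div] at this
  have hc0 : 0 < β / 2 * Real.exp ε := by positivity
  have hc1 : β / 2 * Real.exp ε < 1 := by
    calc β / 2 * Real.exp ε < pmin * (1 / pmin) :=
          mul_lt_mul (by linarith) hexp (Real.exp_pos ε) hpmin0.le
      _ = 1 := mul_one_div_cancel hpmin0.ne'
  have h1c : 0 < 1 - β / 2 * Real.exp ε := by linarith
  -- positivity of S given positive output
  have hex : ∀ (p : X → ℝ), ∀ y, 0 < outDist W p y → 0 < S y := by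
    intro p y hy
    by_contra h
    push_neg at h
    have hz : ∀ x, W x y = 0 := fun x => le_antisymm (le_trans (hSle x y) h) (hW0 x y)
    have : outDist W p y = 0 := Finset.sum_eq_zero fun x _ => by rw [hz x, mul_zero]
    linarith
  -- bdd above
  have hbdd : ∀ (p : X → ℝ), BddAbove {r : ℝ | ∃ y, 0 < outDist W p y ∧ r = leak W p y} := by
    intro p
    apply Set.Finite.bddAbove
    apply Set.Finite.subset (Set.finite_range (leak W p))
    rintro r ⟨y, _, rfl⟩
    exact ⟨y, rfl⟩
  -- Q_Y > 0 implies P_Y > 0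
  have hPYpos : ∀ y, 0 < outDist W Q y → 0 < outDist W P y := by
    intro y hy
    have hxw : ∃ x, 0 < W x y := by
      by_contra h
      push_neg at h
      have : outDist W Q y = 0 := Finset.sum_eq_zero fun x _ => by
        rw [le_antisymm (h x) (hW0 x y), mul_zero]
      linarith
    obtain ⟨x, hx⟩ := hxw
    exact Finset.sum_pos' (fun x _ => mul_nonneg (hPpos x).le (hW0 x y))
      ⟨x, Finset.mem_univ x, mul_pos (hPpos x) hx⟩
  -- PML bound on S
  have hεP : ∀ y, 0 < outDist W P y → S y ≤ Real.exp ε * outDist W P y := by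
    intro y hy
    have h1 : leak W P y ≤ ε := le_trans (le_csSup (hbdd P) ⟨y, hy, rfl⟩) hPML
    have hS : 0 < S y := hex P y hy
    have hq : 0 < S y / outDist W P y := div_pos hS hy
    have h2 := Real.exp_le_exp.2 h1
    rw [leak, Real.exp_log hq] at h2
    rw [div_le_iff₀ hy] at h2
    linarith
  -- lower bound on Q_Y
  have hmax : ∀ a : ℝ, max a 0 = (|a| + a) / 2 := by
    intro a
    rcases le_total a 0 with h | h
    · rw [max_eq_right h, abs_of_nonpos h]; ring
    · rw [max_eq_left h, abs_of_nonneg h]; ring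
  have hQY : ∀ y, outDist W P y - β / 2 * S y ≤ outDist W Q y := by
    intro y
    have key : ∀ x, (P x - Q x) * W x y ≤ max (P x - Q x) 0 * S y := fun x =>
      le_trans (mul_le_mul_of_nonneg_right (le_max_left _ _) (hW0 x y))
        (mul_le_mul_of_nonneg_left (hSle x y) (le_max_right _ _))
    have hsumd : ∑ x, (P x - Q x) = 0 := by
      rw [Finset.sum_sub_distrib, hPsum, hQsum, sub_self]
    have hsmax : ∑ x, max (P x - Q x) 0 ≤ β / 2 := by
      have : ∑ x, max (P x - Q x) 0 = ((∑ x, |P x - Q x|) + ∑ x, (P x - Q x)) / 2 := by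
        rw [show ∑ x, max (P x - Q x) 0 = ∑ x, (|P x - Q x| + (P x - Q x)) / 2 from
          Finset.sum_congr rfl fun x _ => hmax _, ← Finset.sum_div, Finset.sum_add_distrib]
      rw [this, hsumd]
      linarith
    have hsum : ∑ x, (P x - Q x) * W x y ≤ β / 2 * S y := by
      calc ∑ x, (P x - Q x) * W x y ≤ ∑ x, max (P x - Q x) 0 * S y :=
            Finset.sum_le_sum fun x _ => key x
        _ = (∑ x, max (P x - Q x) 0) * S y := by rw [Finset.sum_mul]
        _ ≤ β / 2 * S y := mul_le_mul_of_nonneg_right hsmax (hS0 y)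
    have hdiff : outDist W P y - outDist W Q y = ∑ x, (P x - Q x) * W x y := by
      unfold outDist
      rw [← Finset.sum_sub_distrib]
      exact Finset.sum_congr rfl fun x _ => by ring
    linarith
  -- main bound
  have hne : ∃ y, 0 < outDist W Q y := by
    by_contra h
    push_neg at h
    have hz : ∀ y, outDist W Q y = 0 := fun y =>
      le_antisymm (h y) (Finset.sum_nonneg fun x _ => mul_nonneg (hQpos x).le (hW0 x y))
    have : ∑ y, outDist W Q y = 1 := by
      unfold outDist
      rw [Finset.sum_comm]
      simp_rw [← Finset.mul_sum, hW1, mul_one]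
      exact hQsum
    rw [Finset.sum_eq_zero fun y _ => hz y] at this
    norm_num at this
  obtain ⟨y0, hy0⟩ := hne
  have hmain : epsMin W Q ≤ epsMin W P + (-Real.log (1 - β / 2 * Real.exp ε)) := by
    refine csSup_le ⟨leak W Q y0, ⟨y0, hy0, rfl⟩⟩ ?_
    rintro r ⟨y, hy, rfl⟩
    have hPy := hPYpos y hy
    have hSy : 0 < S y := hex Q y hy
    have hA := hεP y hPy
    have hQlb : (1 - β / 2 * Real.exp ε) * outDist W P y ≤ outDist W Q y := by
      have h2 : β / 2 * S y ≤ β / 2 * (Real.exp ε * outDist W P y) :=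
        mul_le_mul_of_nonneg_left hA (by linarith)
      have h3 := hQY y
      nlinarith
    have hlk : leak W Q y ≤ leak W P y - Real.log (1 - β / 2 * Real.exp ε) := by
      unfold leak
      rw [Real.log_div hSy.ne' hy.ne', Real.log_div hSy.ne' hPy.ne']
      have h4 : Real.log ((1 - β / 2 * Real.exp ε) * outDist W P y) ≤ Real.log (outDist W Q y) :=
        Real.log_le_log (by positivity) hQlb
      rw [Real.log_mul h1c.ne' hPy.ne'] at h4
      linarith
    have hPm : leak W P y ≤ epsMin W P := le_csSup (hbdd P) ⟨y, hPy, rfl⟩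
    linarith
  linarith
end

section
/- Let P_{Y|X} be a mechanism satisfying ε-PML with respect to a full-support distribution P_X on a finite alphabet 𝒳, and let Q_X be any full-support distribution on 𝒳 with ||P_X − Q_X||₁ < 2·e^{−ε}. Then ε_min(P_{Y|X}, Q_X) ≤ ε − log( 1 − e^ε · ||P_X − Q_X||₁ / 2 ). -/
open Finset Real

/-- Leakage increase bound: if `P_{Y|X}` satisfies `ε`-PML w.r.t. `P_X` and
`‖P_X − Q_X‖₁ < 2e^{−ε}`, then
`ε_min(P_{Y|X}, Q_X) ≤ ε − log(1 − e^ε·‖P_X − Q_X‖₁/2)`. -/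
theorem stmt9 {X Y : Type*} [Fintype X] [Fintype Y] [Nonempty X]
    (P Q : X → ℝ) (hP : FullSupport P) (hQ : FullSupport Q)
    (W : X → Y → ℝ) (hW : IsMech W)
    (ε : ℝ) (hPML : epsMin W P ≤ ε)
    (hl1 : (∑ x, |P x - Q x|) < 2 * Real.exp (-ε)) :
    epsMin W Q ≤ ε - Real.log (1 - Real.exp ε * (∑ x, |P x - Q x|) / 2) := by
  obtain ⟨hPpos, hPsum⟩ := hP
  obtain ⟨hQpos, hQsum⟩ := hQ
  obtain ⟨hWnn, hWrow⟩ := hW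
  set Δ : ℝ := ∑ x, |P x - Q x| with hΔdef
  have hΔnn : 0 ≤ Δ := Finset.sum_nonneg fun x _ => abs_nonneg _
  have hexp : Real.exp ε * Real.exp (-ε) = 1 := by
    rw [← Real.exp_add]; simp
  have ht : 0 < 1 - Real.exp ε * Δ / 2 := by
    nlinarith [Real.exp_pos ε, hl1]
  -- per-output bound
  have key : ∀ y, 0 < outDist W Q y →
      leak W Q y ≤ ε - Real.log (1 - Real.exp ε * Δ / 2) := by
    intro y hQy
    set M : ℝ := ⨆ x, W x y with hMdef
    have hbdd : BddAbove (Set.range fun x => W x y) := (Set.finite_range _).bddAbove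
    have hM : ∀ x, W x y ≤ M := fun x => le_ciSup hbdd x
    have hx0 : ∃ x, 0 < W x y := by
      by_contra h
      push_neg at h
      have : outDist W Q y ≤ 0 := Finset.sum_nonpos fun x _ =>
        mul_nonpos_of_nonneg_of_nonpos (hQpos x).le (h x)
      linarith
    obtain ⟨x0, hx0⟩ := hx0
    have hMpos : 0 < M := lt_of_lt_of_le hx0 (hM x0)
    have hPy : 0 < outDist W P y := by
      apply Finset.sum_pos' (fun x _ => mul_nonneg (hPpos x).le (hWnn x y))
      exact ⟨x0, Finset.mem_univ x0, mul_pos (hPpos x0) hx0⟩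
    -- PML at P
    have hSfin : ({r : ℝ | ∃ y, 0 < outDist W P y ∧ r = leak W P y}).Finite := by
      apply (Set.finite_range (leak W P)).subset
      rintro r ⟨y', _, rfl⟩; exact ⟨y', rfl⟩
    have hleakP : leak W P y ≤ ε :=
      le_trans (le_csSup hSfin.bddAbove ⟨y, hPy, rfl⟩) hPML
    have hratio : 0 < M / outDist W P y := div_pos hMpos hPy
    have hMle : M ≤ Real.exp ε * outDist W P y := by
      have := (Real.log_le_iff_le_exp hratio).mp hleakP
      rw [div_le_iff₀ hPy] at this
      linarith [this]
    -- sum bound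
    have hmax : ∀ a : ℝ, max a 0 = (a + |a|) / 2 := by
      intro a
      rcases le_total a 0 with h | h
      · rw [max_eq_right h, abs_of_nonpos h]; ring
      · rw [max_eq_left h, abs_of_nonneg h]; ring
    have hsummax : ∑ x, max (P x - Q x) 0 = Δ / 2 := by
      have : ∑ x, (P x - Q x) = 0 := by
        rw [Finset.sum_sub_distrib, hPsum, hQsum]; ring
      simp only [hmax]
      rw [← Finset.sum_div, Finset.sum_add_distrib, this, hΔdef]
      ring
    have hS : ∑ x, (P x - Q x) * W x y ≤ M * (Δ / 2) := by
      calc ∑ x, (P x - Q x) * W x y ≤ ∑ x, max (P x - Q x) 0 * M := by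
            apply Finset.sum_le_sum
            intro x _
            calc (P x - Q x) * W x y ≤ max (P x - Q x) 0 * W x y :=
                  mul_le_mul_of_nonneg_right (le_max_left _ _) (hWnn x y)
              _ ≤ max (P x - Q x) 0 * M :=
                  mul_le_mul_of_nonneg_left (hM x) (le_max_right _ _)
        _ = M * (Δ / 2) := by rw [← Finset.sum_mul, hsummax, mul_comm]
    have hQP : outDist W Q y = outDist W P y - ∑ x, (P x - Q x) * W x y := by
      unfold outDist
      rw [← Finset.sum_sub_distrib]
      congr 1; funext x; ring
    have hQlb : M * (Real.exp (-ε) * (1 - Real.exp ε * Δ / 2)) ≤ outDist W Q y := by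
      have h1 : Real.exp (-ε) * (1 - Real.exp ε * Δ / 2) = Real.exp (-ε) - Δ / 2 := by
        have := hexp; nlinarith [hexp]
      rw [h1, hQP]
      have hPylb : M * Real.exp (-ε) ≤ outDist W P y := by
        nlinarith [Real.exp_pos (-ε), hMle]
      nlinarith [hS]
    -- conclude
    have hgoal : M / outDist W Q y ≤ Real.exp ε / (1 - Real.exp ε * Δ / 2) := by
      rw [div_le_div_iff₀ hQy ht]
      nlinarith [hQlb, Real.exp_pos ε, Real.exp_pos (-ε)]
    have := Real.log_le_log (div_pos hMpos hQy) hgoal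
    rw [Real.log_div (Real.exp_ne_zero ε) (ne_of_gt ht), Real.log_exp] at this
    exact this
  -- nonemptiness
  have hsumQ : ∑ y, outDist W Q y = 1 := by
    unfold outDist
    rw [Finset.sum_comm]
    simp only [← Finset.mul_sum]
    simp [hWrow, hQsum]
  have hne : ∃ y, 0 < outDist W Q y := by
    by_contra h
    push_neg at h
    have : ∑ y, outDist W Q y ≤ 0 := Finset.sum_nonpos fun y _ => h y
    linarith
  obtain ⟨y0, hy0⟩ := hne
  unfold epsMin
  refine csSup_le ⟨leak W Q y0, ⟨y0, hy0, rfl⟩⟩ ?_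
  rintro r ⟨y, hy, rfl⟩
  exact key y hy
end

section
/- Let 𝒳 be a finite alphabet with |𝒳| = N ≥ 2 and let P_X be a full-support distribution on 𝒳. Let X_1, …, X_m be i.i.d. random variables with law P_X and let P̂_X be the empirical distribution P̂_X(x) = (1/m)·Σ_{i=1}^m 1{X_i = x}. Fix 0 ≤ ε < ε'. Then the probability (over the samples) of the event that P̂_X has full support AND there exists a privacy mechanism P_{Y|X} (to some finite output alphabet) with ε_min(P_{Y|X}, P̂_X) ≤ ε but ε_min(P_{Y|X}, P_X) > ε' is at most (2^N − 2)·exp( −2m·(e^{−ε} − e^{−ε'})² ). -/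
open Finset Real

section Aux
open Real MeasureTheory ProbabilityTheory


lemma bern_mgf_le {p t : ℝ} (hp0 : 0 ≤ p) (hp1 : p ≤ 1) (ht : 0 ≤ t) :
    1 - p + p * exp t ≤ exp (p * t + t ^ 2 / 8) := by
  set d : ℝ → ℝ := fun s => 1 - p + p * exp s with hd
  have hdpos : ∀ s : ℝ, 0 < d s := by
    intro s
    have := exp_pos s
    rcases eq_or_lt_of_le hp0 with h | h
    · simp [hd, ← h]
    · have := mul_pos h (exp_pos s)
      simp only [hd]
      linarith
  -- derivative facts
  have hdd : ∀ s : ℝ, HasDerivAt d (p * exp s) s := by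
    intro s
    exact ((hasDerivAt_exp s).const_mul p).const_add (1 - p)
  set g : ℝ → ℝ := fun s => p + s / 4 - p * exp s / d s with hg
  have hgd : ∀ s : ℝ, HasDerivAt g (1 / 4 - (p * exp s * d s - p * exp s * (p * exp s)) / (d s) ^ 2) s := by
    intro s
    have h1 : HasDerivAt (fun s => p + s / 4) (1 / 4) s := by
      simpa using ((hasDerivAt_id s).div_const 4).const_add p
    have h2 : HasDerivAt (fun s => p * exp s / d s)
        ((p * exp s * d s - p * exp s * (p * exp s)) / (d s) ^ 2) s :=
      ((hasDerivAt_exp s).const_mul p).div (hdd s) (hdpos s).ne'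
    exact h1.sub h2
  have hg0 : g 0 = 0 := by simp [hg, hd]
  have hgmono : MonotoneOn g (Set.Ici (0:ℝ)) := by
    apply monotoneOn_of_deriv_nonneg (convex_Ici 0)
    · exact fun s _ => ((hgd s).continuousAt).continuousWithinAt
    · intro s _
      exact (hgd s).differentiableAt.differentiableWithinAt
    · intro s _
      rw [(hgd s).deriv]
      have hnum : (p * exp s * d s - p * exp s * (p * exp s)) = p * exp s * (1 - p) := by
        simp only [hd]; ring
      have h2 : (0:ℝ) < (d s) ^ 2 := pow_pos (hdpos s) 2
      rw [hnum, sub_nonneg, div_le_iff₀ h2]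
      have hds : (d s) = (1 - p) + p * exp s := rfl
      rw [hds]
      nlinarith [sq_nonneg (p * exp s - (1 - p))]
  have hgnn : ∀ s : ℝ, 0 ≤ s → 0 ≤ g s := by
    intro s hs
    have := hgmono (Set.self_mem_Ici) (Set.mem_Ici.mpr hs) hs
    rwa [hg0] at this
  set f : ℝ → ℝ := fun s => p * s + s ^ 2 / 8 - Real.log (d s) with hf
  have hfd : ∀ s : ℝ, HasDerivAt f (g s) s := by
    intro s
    have h1 : HasDerivAt (fun s : ℝ => p * s + s ^ 2 / 8) (p + 2 * s / 8) s := by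
      exact (((hasDerivAt_id s).const_mul p).add
        (((hasDerivAt_pow 2 s)).div_const 8)).congr_deriv (by simp)
    have h2 : HasDerivAt (fun s => Real.log (d s)) (p * exp s / d s) s :=
      (hdd s).log (hdpos s).ne'
    have := h1.sub h2
    convert this using 1
    · rfl
    · rfl
    · rfl
    simp only [hg]
    ring
  have hfmono : MonotoneOn f (Set.Ici (0:ℝ)) := by
    apply monotoneOn_of_deriv_nonneg (convex_Ici 0)
    · exact fun s _ => ((hfd s).continuousAt).continuousWithinAt
    · exact fun s _ => (hfd s).differentiableAt.differentiableWithinAt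
    · intro s hs
      rw [(hfd s).deriv]
      exact hgnn s (le_of_lt (by simpa using hs))
  have hf0 : f 0 = 0 := by simp [hf, hd]
  have hft : 0 ≤ f t := by
    have := hfmono (Set.self_mem_Ici) (Set.mem_Ici.mpr ht) ht
    rwa [hf0] at this
  have : Real.log (d t) ≤ p * t + t ^ 2 / 8 := by
    simp only [hf] at hft; linarith
  exact (Real.log_le_iff_le_exp (hdpos t)).mp this

lemma det_lemma {X : Type*} [Fintype X] [Nonempty X] {k : ℕ} (W : X → Fin k → ℝ)
    (hW : IsMech W) (P Q : X → ℝ) (hP : FullSupport P) (hQ : FullSupport Q)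
    (ε ε' : ℝ) (hε : 0 ≤ ε) (hεε' : ε ≤ ε')
    (hl : epsMin W Q ≤ ε)
    (hd : ∑ x, |P x - Q x| ≤ 2 * (Real.exp (-ε) - Real.exp (-ε'))) :
    epsMin W P ≤ ε' := by
  obtain ⟨hW0, hW1⟩ := hW
  set M : Fin k → ℝ := fun y => ⨆ x, W x y with hM
  have hbdd : ∀ y : Fin k, BddAbove (Set.range fun x => W x y) :=
    fun y => Set.Finite.bddAbove (Set.finite_range _)
  have hMle : ∀ x y, W x y ≤ M y := fun x y => le_ciSup (hbdd y) x
  have hM0 : ∀ y, 0 ≤ M y := fun y => le_trans (hW0 (Classical.arbitrary X) y) (hMle _ y)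
  -- positivity of M on positive-output y (for any full-support distribution R)
  have hMpos : ∀ (R : X → ℝ), (∀ x, 0 < R x) → ∀ y, 0 < outDist W R y → 0 < M y := by
    intro R hR y hy
    by_contra h
    have hM0' : M y = 0 := le_antisymm (not_lt.mp h) (hM0 y)
    have : outDist W R y ≤ 0 := by
      rw [outDist]
      apply Finset.sum_nonpos
      intro x _
      have := hMle x y
      rw [hM0'] at this
      nlinarith [hR x, hW0 x y, this]
    linarith
  -- claim 1 : M y ≤ exp ε * outDist W Q y for all y
  have claim1 : ∀ y, M y ≤ Real.exp ε * outDist W Q y := by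
    intro y
    rcases lt_or_ge 0 (outDist W Q y) with hy | hy
    · have hmem : leak W Q y ∈ {r : ℝ | ∃ y, 0 < outDist W Q y ∧ r = leak W Q y} :=
        ⟨y, hy, rfl⟩
      have hbdd2 : BddAbove {r : ℝ | ∃ y, 0 < outDist W Q y ∧ r = leak W Q y} := by
        apply Set.Finite.bddAbove
        apply Set.Finite.subset (Set.finite_range (leak W Q))
        rintro r ⟨y, _, rfl⟩
        exact ⟨y, rfl⟩
      have hle : leak W Q y ≤ ε := le_trans (le_csSup hbdd2 hmem) hl
      have hMp : 0 < M y := hMpos Q hQ.1 y hy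
      have hratio : M y / outDist W Q y ≤ Real.exp ε := by
        rw [leak] at hle
        exact (Real.log_le_iff_le_exp (div_pos hMp hy)).mp hle
      rw [div_le_iff₀ hy] at hratio
      linarith [hratio]
    · -- outDist W Q y ≤ 0 forces it to be 0 and all W x y = 0
      have hzero : ∀ x, W x y = 0 := by
        intro x
        by_contra hx
        have hx' : 0 < W x y := lt_of_le_of_ne (hW0 x y) (Ne.symm hx)
        have : 0 < outDist W Q y := by
          rw [outDist]
          apply Finset.sum_pos'
          · intro z _; exact mul_nonneg (le_of_lt (hQ.1 z)) (hW0 z y)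
          · exact ⟨x, Finset.mem_univ x, mul_pos (hQ.1 x) hx'⟩
        linarith
      have : M y = 0 := by
        rw [hM]
        simp only [hzero]
        exact ciSup_const
      rw [this, outDist]
      simp [hzero]
  -- claim 2: each leak wrt P is ≤ ε'
  have claim2 : ∀ y, 0 < outDist W P y → leak W P y ≤ ε' := by
    intro y hy
    have hMp : 0 < M y := hMpos P hP.1 y hy
    -- outDist W P y ≥ outDist W Q y - M y * (∑ |P - Q|) / 2
    have hhalf : ∑ x, max (Q x - P x) 0 = (∑ x, |P x - Q x|) / 2 := by
      have h1 : ∀ x : X, max (Q x - P x) 0 = (|P x - Q x| + (Q x - P x)) / 2 := by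
        intro x
        rcases le_or_gt (P x) (Q x) with h | h
        · rw [max_eq_left (by linarith), abs_of_nonpos (by linarith)]; ring
        · rw [max_eq_right (by linarith), abs_of_pos (by linarith)]; ring
      simp only [h1]
      rw [← Finset.sum_div, Finset.sum_add_distrib, Finset.sum_sub_distrib, hP.2, hQ.2]
      ring
    have hlb : outDist W Q y - M y * ((∑ x, |P x - Q x|) / 2) ≤ outDist W P y := by
      have hterm : ∀ x : X, Q x * W x y - max (Q x - P x) 0 * M y ≤ P x * W x y := by
        intro x
        rcases le_or_gt (Q x) (P x) with h | h
        · have : max (Q x - P x) 0 = 0 := max_eq_right (by linarith)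
          rw [this]
          nlinarith [hW0 x y]
        · have : max (Q x - P x) 0 = Q x - P x := max_eq_left (by linarith)
          rw [this]
          nlinarith [hMle x y, hW0 x y, hMp]
      calc outDist W Q y - M y * ((∑ x, |P x - Q x|) / 2)
          = ∑ x, (Q x * W x y - max (Q x - P x) 0 * M y) := by
            rw [← hhalf, outDist, Finset.sum_sub_distrib, ← Finset.sum_mul]
            ring
        _ ≤ ∑ x, P x * W x y := Finset.sum_le_sum fun x _ => hterm x
        _ = outDist W P y := rfl
    have hQlb : M y * Real.exp (-ε) ≤ outDist W Q y := by
      have h := claim1 y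
      have he : Real.exp (-ε) * Real.exp ε = 1 := by rw [← Real.exp_add]; simp
      have h2 := mul_le_mul_of_nonneg_left h (le_of_lt (Real.exp_pos (-ε)))
      have h3 : Real.exp (-ε) * (Real.exp ε * outDist W Q y) = outDist W Q y := by
        rw [← mul_assoc, he, one_mul]
      rw [h3] at h2
      linarith
    have hkey : M y * Real.exp (-ε') ≤ outDist W P y := by
      have hd2 : (∑ x, |P x - Q x|) / 2 ≤ Real.exp (-ε) - Real.exp (-ε') := by linarith
      have : M y * ((∑ x, |P x - Q x|) / 2) ≤ M y * (Real.exp (-ε) - Real.exp (-ε')) :=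
        mul_le_mul_of_nonneg_left hd2 (hM0 y)
      linarith
    have hratio : M y / outDist W P y ≤ Real.exp ε' := by
      rw [div_le_iff₀ hy]
      have h1 : M y * Real.exp (-ε') * Real.exp ε' ≤ outDist W P y * Real.exp ε' :=
        mul_le_mul_of_nonneg_right hkey (le_of_lt (Real.exp_pos ε'))
      rw [mul_assoc, ← Real.exp_add] at h1
      simp only [neg_add_cancel, Real.exp_zero, mul_one] at h1
      linarith
    rw [leak]
    calc Real.log (M y / outDist W P y) ≤ Real.log (Real.exp ε') :=
          Real.log_le_log (div_pos hMp hy) hratio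
      _ = ε' := Real.log_exp ε'
  rw [epsMin]
  apply Real.sSup_le
  · rintro r ⟨y, hy, rfl⟩
    exact claim2 y hy
  · linarith

lemma hoeff {Ω : Type*} [MeasurableSpace Ω] (μ : Measure Ω) [IsProbabilityMeasure μ]
    {m : ℕ} (Z : Fin m → Ω → ℝ) (hZmeas : ∀ i, Measurable (Z i))
    (hindep : iIndepFun Z μ)
    (hval : ∀ i ω, Z i ω = 0 ∨ Z i ω = 1)
    (p : ℝ) (hp0 : 0 ≤ p) (hp1 : p ≤ 1)
    (hmean : ∀ i, μ {ω | Z i ω = 1} = ENNReal.ofReal p)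
    (δ : ℝ) (hδ : 0 < δ) :
    μ {ω | (m : ℝ) * (p + δ) ≤ ∑ i, Z i ω} ≤
      ENNReal.ofReal (Real.exp (-2 * m * δ ^ 2)) := by
  set t : ℝ := 4 * δ with htdef
  have ht : 0 ≤ t := by positivity
  -- mgf of each Z i
  have hmgf : ∀ i, mgf (Z i) μ t = 1 - p + p * Real.exp t := by
    intro i
    have hS : MeasurableSet {ω | Z i ω = 1} := hZmeas i (measurableSet_singleton 1)
    have hfun : (fun ω => Real.exp (t * Z i ω)) =
        fun ω => 1 + Set.indicator {ω | Z i ω = 1} (fun _ => Real.exp t - 1) ω := by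
      funext ω
      rcases hval i ω with h | h
      · rw [h, Set.indicator_of_notMem]
        · simp
        · simp [Set.mem_setOf_eq, h]
      · rw [h, Set.indicator_of_mem (by simpa [Set.mem_setOf_eq] using h)]
        simp
    rw [mgf, hfun, integral_add (integrable_const 1)
      ((integrable_const (Real.exp t - 1)).indicator hS),
      integral_const, integral_indicator_const _ hS, measureReal_def, measureReal_def, hmean i,
      ENNReal.toReal_ofReal hp0]
    simp only [measure_univ, ENNReal.toReal_one, smul_eq_mul, one_smul]
    ring
  -- the sum
  set S : Ω → ℝ := ∑ i, Z i with hSdef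
  have hSmeas : Measurable S := by
    have : S = fun a => ∑ i, Z i a := by funext a; simp [hSdef]
    rw [this]
    exact Finset.measurable_sum Finset.univ fun i _ => hZmeas i
  have hSbound : ∀ ω, S ω ≤ m := by
    intro ω
    have : S ω = ∑ i, Z i ω := by simp [hSdef]
    rw [this]
    calc ∑ i, Z i ω ≤ ∑ _i : Fin m, (1:ℝ) :=
          Finset.sum_le_sum fun i _ => by rcases hval i ω with h | h <;> rw [h] <;> norm_num
      _ = m := by simp
  have hint : Integrable (fun ω => Real.exp (t * S ω)) μ := by
    refine ⟨((hSmeas.const_mul t).exp).aestronglyMeasurable, ?_⟩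
    apply HasFiniteIntegral.of_bounded (C := Real.exp (t * m))
    filter_upwards with ω
    rw [Real.norm_eq_abs, abs_of_pos (Real.exp_pos _)]
    exact Real.exp_le_exp.mpr (mul_le_mul_of_nonneg_left (hSbound ω) ht)
  have hcher := measure_ge_le_exp_mul_mgf (X := S) (μ := μ) ((m:ℝ) * (p + δ)) ht hint
  have hprod : mgf S μ t = (1 - p + p * Real.exp t) ^ m := by
    have := hindep.mgf_sum (t := t) hZmeas Finset.univ
    rw [hSdef, this]
    rw [Finset.prod_congr rfl fun i _ => hmgf i, Finset.prod_const, Finset.card_univ,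
      Fintype.card_fin]
  have hbern : (1 - p + p * Real.exp t) ^ m ≤ Real.exp ((m:ℝ) * (p * t + t ^ 2 / 8)) := by
    calc (1 - p + p * Real.exp t) ^ m ≤ (Real.exp (p * t + t ^ 2 / 8)) ^ m := by
          apply pow_le_pow_left₀ (by nlinarith [Real.exp_pos t, Real.exp_one_gt_d9]) ?_ m
          exact bern_mgf_le hp0 hp1 ht
      _ = Real.exp ((m:ℝ) * (p * t + t ^ 2 / 8)) := by
          rw [← Real.exp_nat_mul]
  have hfinal : Real.exp (-t * ((m:ℝ) * (p + δ))) * mgf S μ t ≤ Real.exp (-2 * m * δ ^ 2) := by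
    rw [hprod]
    calc Real.exp (-t * ((m:ℝ) * (p + δ))) * (1 - p + p * Real.exp t) ^ m
        ≤ Real.exp (-t * ((m:ℝ) * (p + δ))) * Real.exp ((m:ℝ) * (p * t + t ^ 2 / 8)) :=
          mul_le_mul_of_nonneg_left hbern (le_of_lt (Real.exp_pos _))
      _ = Real.exp (-t * ((m:ℝ) * (p + δ)) + (m:ℝ) * (p * t + t ^ 2 / 8)) := by
          rw [← Real.exp_add]
      _ = Real.exp (-2 * m * δ ^ 2) := by
          congr 1
          rw [htdef]
          ring
  have hset : {ω | (m : ℝ) * (p + δ) ≤ ∑ i, Z i ω} = {ω | (m : ℝ) * (p + δ) ≤ S ω} := by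
    ext ω; simp [hSdef]
  rw [hset]
  have h1 : μ {ω | (m : ℝ) * (p + δ) ≤ S ω} =
      ENNReal.ofReal ((μ {ω | (m : ℝ) * (p + δ) ≤ S ω}).toReal) := by
    rw [ENNReal.ofReal_toReal (measure_ne_top μ _)]
  rw [h1]
  exact ENNReal.ofReal_le_ofReal (le_trans hcher hfinal)

end Aux

open MeasureTheory ProbabilityTheory in
/-- With probability at least `1 − (2^N − 2)·exp(−2m(e^{−ε} − e^{−ε'})²)` over `m` i.i.d.
samples from `P_X`, every mechanism satisfying `ε`-PML w.r.t. the (full-support) empirical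
distribution also satisfies `ε'`-PML w.r.t. the true distribution `P_X`. -/
theorem stmt11 {X : Type*} [Fintype X] [Nonempty X] [DecidableEq X] [MeasurableSpace X]
    [MeasurableSingletonClass X]
    (hN : 2 ≤ Fintype.card X)
    (P : X → ℝ) (hP : FullSupport P)
    {Ω : Type*} [MeasurableSpace Ω] (μ : Measure Ω) [IsProbabilityMeasure μ]
    (m : ℕ) (hm : 0 < m) (Xs : Fin m → Ω → X)
    (hmeas : ∀ i, Measurable (Xs i))
    (hindep : iIndepFun Xs μ)
    (hlaw : ∀ i x, μ {ω | Xs i ω = x} = ENNReal.ofReal (P x))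
    (ε ε' : ℝ) (hε : 0 ≤ ε) (hεε' : ε < ε') :
    μ {ω | FullSupport (fun x => (∑ i, if Xs i ω = x then (1 : ℝ) else 0) / m) ∧
        ∃ (k : ℕ) (W : X → Fin k → ℝ), IsMech W ∧
          epsMin W (fun x => (∑ i, if Xs i ω = x then (1 : ℝ) else 0) / m) ≤ ε ∧
          ε' < epsMin W P} ≤
      ENNReal.ofReal ((2 ^ Fintype.card X - 2) *
        Real.exp (-2 * m * (Real.exp (-ε) - Real.exp (-ε')) ^ 2)) := by
  classical
  set δ : ℝ := Real.exp (-ε) - Real.exp (-ε') with hδdef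
  have hδ : 0 < δ := by
    have : Real.exp (-ε') < Real.exp (-ε) := Real.exp_lt_exp.mpr (by linarith)
    simp only [hδdef]; linarith
  set Phat : Ω → X → ℝ := fun ω x => (∑ i, if Xs i ω = x then (1 : ℝ) else 0) / m with hPhat
  set 𝒜 : Finset (Finset X) :=
    ((Finset.univ : Finset X).powerset.erase ∅).erase Finset.univ with h𝒜
  set EA : Finset X → Set Ω := fun A =>
    {ω | (m : ℝ) * ((∑ x ∈ A, P x) + δ) ≤ ∑ i, (if Xs i ω ∈ A then (1:ℝ) else 0)} with hEA
  -- Step 1: the event is contained in the union of the EA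
  have hsub : {ω | FullSupport (Phat ω) ∧
      ∃ (k : ℕ) (W : X → Fin k → ℝ), IsMech W ∧ epsMin W (Phat ω) ≤ ε ∧ ε' < epsMin W P} ⊆
      ⋃ A ∈ 𝒜, EA A := by
    rintro ω ⟨hfs, k, W, hW, hle, hgt⟩
    -- the ℓ1 distance must be large
    have hD : 2 * δ < ∑ x, |P x - Phat ω x| := by
      by_contra h
      push_neg at h
      have := det_lemma W hW P (Phat ω) hP hfs ε ε' hε (le_of_lt hεε') hle (by linarith)
      linarith
    set A : Finset X := Finset.univ.filter (fun x => P x < Phat ω x) with hA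
    have hhalf : ∑ x ∈ A, (Phat ω x - P x) = (∑ x, |P x - Phat ω x|) / 2 := by
      rw [hA, Finset.sum_filter]
      have h1 : ∀ x : X, (if P x < Phat ω x then Phat ω x - P x else 0) =
          (|P x - Phat ω x| + (Phat ω x - P x)) / 2 := by
        intro x
        rcases lt_or_ge (P x) (Phat ω x) with h | h
        · rw [if_pos h, abs_of_neg (by linarith)]; ring
        · rw [if_neg (not_lt.mpr h), abs_of_nonneg (by linarith)]; ring
      rw [Finset.sum_congr rfl fun x _ => h1 x, ← Finset.sum_div, Finset.sum_add_distrib,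
        Finset.sum_sub_distrib, hP.2, hfs.2]
      ring
    have hAgap : (∑ x ∈ A, P x) + δ < ∑ x ∈ A, Phat ω x := by
      have : δ < ∑ x ∈ A, (Phat ω x - P x) := by rw [hhalf]; linarith
      rw [Finset.sum_sub_distrib] at this
      linarith
    -- convert the empirical mass of A into the indicator sum
    have hcnt : ∑ x ∈ A, Phat ω x = (∑ i, (if Xs i ω ∈ A then (1:ℝ) else 0)) / m := by
      simp only [hPhat]
      rw [← Finset.sum_div]
      congr 1
      rw [Finset.sum_comm]
      apply Finset.sum_congr rfl
      intro i _
      exact Finset.sum_ite_eq A (Xs i ω) (fun _ => (1:ℝ))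
    have hmpos : (0:ℝ) < m := by exact_mod_cast hm
    have hωEA : ω ∈ EA A := by
      simp only [hEA, Set.mem_setOf_eq]
      have := hAgap
      rw [hcnt, lt_div_iff₀ hmpos] at this
      nlinarith
    -- A is a proper nonempty subset
    have hAne : A ≠ ∅ := by
      intro h
      rw [h, Finset.sum_empty] at hhalf
      linarith
    have hAnu : A ≠ Finset.univ := by
      intro h
      rw [h] at hhalf
      rw [Finset.sum_sub_distrib, hfs.2, hP.2] at hhalf
      linarith
    have hA𝒜 : A ∈ 𝒜 := by
      rw [h𝒜]
      exact Finset.mem_erase.mpr ⟨hAnu, Finset.mem_erase.mpr ⟨hAne,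
        Finset.mem_powerset.mpr (Finset.subset_univ A)⟩⟩
    exact Set.mem_biUnion hA𝒜 hωEA
  -- Step 2: bound each EA via Hoeffding
  have hEAbd : ∀ A ∈ 𝒜, μ (EA A) ≤ ENNReal.ofReal (Real.exp (-2 * m * δ ^ 2)) := by
    intro A _
    set g : X → ℝ := fun x => if x ∈ A then (1:ℝ) else 0 with hg
    have hgm : Measurable g := measurable_of_countable g
    set Z : Fin m → Ω → ℝ := fun i => g ∘ Xs i with hZ
    set p : ℝ := ∑ x ∈ A, P x with hp
    have hp0 : 0 ≤ p := Finset.sum_nonneg fun x _ => le_of_lt (hP.1 x)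
    have hp1 : p ≤ 1 := by
      rw [hp, ← hP.2]
      exact Finset.sum_le_sum_of_subset_of_nonneg (Finset.subset_univ A)
        (fun x _ _ => le_of_lt (hP.1 x))
    have hmean : ∀ i, μ {ω | Z i ω = 1} = ENNReal.ofReal p := by
      intro i
      have hset1 : {ω | Z i ω = 1} = ⋃ x ∈ A, {ω | Xs i ω = x} := by
        ext ω
        simp only [hZ, hg, Function.comp_apply, Set.mem_setOf_eq, Set.mem_iUnion,
          Set.mem_setOf_eq, exists_prop]
        constructor
        · intro h
          by_cases hx : Xs i ω ∈ A
          · exact ⟨Xs i ω, hx, rfl⟩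
          · rw [if_neg hx] at h; norm_num at h
        · rintro ⟨x, hx, hxeq⟩
          rw [if_pos (hxeq ▸ hx)]
      have hdisj : (↑A : Set X).PairwiseDisjoint (fun x => {ω | Xs i ω = x}) := by
        intro x _ y _ hxy
        simp only [Function.onFun]
        rw [Set.disjoint_left]
        rintro ω (h1 : Xs i ω = x) (h2 : Xs i ω = y)
        exact hxy (h1 ▸ h2)
      rw [hset1, measure_biUnion_finset hdisj
        (fun x _ => hmeas i (measurableSet_singleton x))]
      have hsum : ∑ x ∈ A, μ {ω | Xs i ω = x} = ∑ x ∈ A, ENNReal.ofReal (P x) :=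
        Finset.sum_congr rfl fun x _ => hlaw i x
      rw [hsum, hp]
      exact (ENNReal.ofReal_sum_of_nonneg fun x _ => le_of_lt (hP.1 x)).symm
    have hEAeq : EA A = {ω | (m:ℝ) * (p + δ) ≤ ∑ i, Z i ω} := by
      ext ω
      simp only [hEA, hZ, hg, Set.mem_setOf_eq, Function.comp_apply, hp]
    rw [hEAeq]
    exact hoeff μ Z (fun i => hgm.comp (hmeas i))
      (hindep.comp (fun _ => g) (fun _ => hgm))
      (fun i ω => by by_cases h : Xs i ω ∈ A <;> simp [hZ, hg, h])
      p hp0 hp1 hmean δ hδ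
  -- Step 3: union bound and counting
  calc μ {ω | FullSupport (Phat ω) ∧
      ∃ (k : ℕ) (W : X → Fin k → ℝ), IsMech W ∧ epsMin W (Phat ω) ≤ ε ∧ ε' < epsMin W P}
      ≤ μ (⋃ A ∈ 𝒜, EA A) := measure_mono hsub
    _ ≤ ∑ A ∈ 𝒜, μ (EA A) := measure_biUnion_finset_le 𝒜 EA
    _ ≤ ∑ _A ∈ 𝒜, ENNReal.ofReal (Real.exp (-2 * m * δ ^ 2)) :=
        Finset.sum_le_sum hEAbd
    _ = (𝒜.card : ENNReal) * ENNReal.ofReal (Real.exp (-2 * m * δ ^ 2)) := by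
        rw [Finset.sum_const, nsmul_eq_mul]
    _ ≤ ENNReal.ofReal ((2 ^ Fintype.card X - 2) * Real.exp (-2 * m * δ ^ 2)) := by
        have hcard : 𝒜.card = 2 ^ Fintype.card X - 2 := by
          rw [h𝒜, Finset.card_erase_of_mem, Finset.card_erase_of_mem]
          · rw [Finset.card_powerset, Finset.card_univ]; omega
          · exact Finset.mem_powerset.mpr (Finset.empty_subset _)
          · refine Finset.mem_erase.mpr ⟨?_, Finset.mem_powerset.mpr (Finset.subset_univ _)⟩
            exact (Finset.univ_nonempty).ne_empty
        have h2N : 2 ≤ 2 ^ Fintype.card X := by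
          calc 2 = 2 ^ 1 := rfl
            _ ≤ 2 ^ Fintype.card X := Nat.pow_le_pow_right (by norm_num) (by omega)
        have hcast : ((𝒜.card : ℕ) : ℝ) = 2 ^ Fintype.card X - 2 := by
          rw [hcard, Nat.cast_sub h2N]
          norm_num
        rw [← ENNReal.ofReal_natCast 𝒜.card, ← ENNReal.ofReal_mul (by positivity), hcast]
end

section
/- Validity of the optimal binary mechanism: let 𝒳 = {x₁, x₂}, let P̂_X be a full-support distribution on 𝒳 with p₁ = P̂_X(x₁) ≥ P̂_X(x₂) = 1 − p₁, let 0 < β < 2(1−p₁), and let 0 ≤ ε ≤ −log(p₁ − β/2). Define the 2×2 matrix P*_{Y|X} with rows indexed by x₁, x₂ and columns by y₁, y₂ given by P*_{Y|X} = (1/(1+β·e^ε)) · [[ e^ε(1−p₁+β/2), 1−e^ε(1−p₁−β/2) ], [ 1−e^ε(p₁−β/2), e^ε(p₁+β/2) ]]. Then P*_{Y|X} is a valid privacy mechanism (all entries nonnegative, each row sums to 1) and it satisfies ε-PML with respect to every full-support distribution Q_X on 𝒳 with ||P̂_X − Q_X||₁ ≤ β. -/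
open Finset Real

/-- The optimal binary mechanism designed for the estimate `(p₁, 1 − p₁)` and the
ℓ1-uncertainty radius `β`. -/
noncomputable def binMech (p₁ β ε : ℝ) : Fin 2 → Fin 2 → ℝ :=
  fun i j =>
    (1 / (1 + β * Real.exp ε)) *
      ![![Real.exp ε * (1 - p₁ + β / 2), 1 - Real.exp ε * (1 - p₁ - β / 2)],
        ![1 - Real.exp ε * (p₁ - β / 2), Real.exp ε * (p₁ + β / 2)]] i j


lemma sup_fin2 (f : Fin 2 → ℝ) : (⨆ x, f x) = max (f 0) (f 1) := by
  apply le_antisymm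
  · refine ciSup_le fun x => ?_
    fin_cases x
    · exact le_max_left _ _
    · exact le_max_right _ _
  · exact max_le (le_ciSup (Set.finite_range f).bddAbove 0)
      (le_ciSup (Set.finite_range f).bddAbove 1)

lemma leak_le {W : Fin 2 → Fin 2 → ℝ} {Q : Fin 2 → ℝ} {ε : ℝ} (y : Fin 2)
    (hout : 0 < outDist W Q y) (hpos : 0 < max (W 0 y) (W 1 y))
    (h0 : W 0 y ≤ Real.exp ε * outDist W Q y)
    (h1 : W 1 y ≤ Real.exp ε * outDist W Q y) :
    leak W Q y ≤ ε := by
  unfold leak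
  rw [sup_fin2, Real.log_le_iff_le_exp (div_pos hpos hout), div_le_iff₀ hout]
  exact max_le h0 h1

set_option maxHeartbeats 1000000 in
/-- The optimal binary mechanism is a valid mechanism and satisfies `ε`-PML with respect
to every full-support distribution in the ℓ1-ball of radius `β` around `(p₁, 1 − p₁)`. -/
theorem stmt12 (p₁ : ℝ) (hp : 1 / 2 ≤ p₁) (hp1 : p₁ < 1)
    (β : ℝ) (hβ0 : 0 < β) (hβ : β < 2 * (1 - p₁))
    (ε : ℝ) (hε0 : 0 ≤ ε) (hε : ε ≤ -Real.log (p₁ - β / 2)) :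
    IsMech (binMech p₁ β ε) ∧
      ∀ Q : Fin 2 → ℝ, FullSupport Q →
        (∑ x, |(![p₁, 1 - p₁]) x - Q x|) ≤ β → epsMin (binMech p₁ β ε) Q ≤ ε := by
  have hE0 : (0:ℝ) < Real.exp ε := Real.exp_pos ε
  have hE1 : (1:ℝ) ≤ Real.exp ε := Real.one_le_exp hε0
  set E := Real.exp ε with hEdef
  have hs0 : (0:ℝ) < p₁ - β / 2 := by linarith
  have hEs : E * (p₁ - β / 2) ≤ 1 := by
    have h1 : E ≤ Real.exp (-Real.log (p₁ - β / 2)) := Real.exp_le_exp.mpr hε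
    rw [Real.exp_neg, Real.exp_log hs0] at h1
    have := (le_div_iff₀ hs0).mp (h1.trans_eq (inv_eq_one_div _))
    linarith
  have hD : (0:ℝ) < 1 + β * E := by nlinarith
  have h00 : binMech p₁ β ε 0 0 = (1 / (1 + β * E)) * (E * (1 - p₁ + β / 2)) := by
    simp [binMech, hEdef]
  have h01 : binMech p₁ β ε 0 1 = (1 / (1 + β * E)) * (1 - E * (1 - p₁ - β / 2)) := by
    simp [binMech, hEdef]
  have h10 : binMech p₁ β ε 1 0 = (1 / (1 + β * E)) * (1 - E * (p₁ - β / 2)) := by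
    simp [binMech, hEdef]
  have h11 : binMech p₁ β ε 1 1 = (1 / (1 + β * E)) * (E * (p₁ + β / 2)) := by
    simp [binMech, hEdef]
  have hDinv : (0:ℝ) < 1 / (1 + β * E) := by positivity
  constructor
  · constructor
    · intro x y
      obtain hx | hx : x = 0 ∨ x = 1 := by omega
      all_goals obtain hy' | hy' : y = 0 ∨ y = 1 := by omega
      all_goals subst hx hy'
      · rw [h00]; nlinarith
      · rw [h01]
        apply mul_nonneg hDinv.le
        nlinarith
      · rw [h10]
        apply mul_nonneg hDinv.le
        linarith
      · rw [h11]
        have : 0 < p₁ + β / 2 := by linarith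
        positivity
    · intro x
      obtain hx | hx : x = 0 ∨ x = 1 := by omega
      all_goals subst hx
      · rw [Fin.sum_univ_two, h00, h01]
        field_simp
        ring
      · rw [Fin.sum_univ_two, h10, h11]
        field_simp
        ring
  · intro Q hQ hL
    obtain ⟨hQpos, hQsum⟩ := hQ
    rw [Fin.sum_univ_two] at hQsum
    have hQ1 : Q 1 = 1 - Q 0 := by linarith
    set q := Q 0 with hqdef
    have hq0 : 0 < q := hQpos 0
    have hq1 : q < 1 := by have := hQpos 1; rw [hQ1] at this; linarith
    rw [Fin.sum_univ_two] at hL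
    simp only [Matrix.cons_val_zero, Matrix.cons_val_one, Matrix.head_cons] at hL
    have habs : |p₁ - q| ≤ β / 2 := by
      have h2 : (1 - p₁) - Q 1 = -(p₁ - q) := by rw [hQ1]; ring
      rw [h2, abs_neg] at hL
      linarith
    have hql : p₁ - β / 2 ≤ q := by
      have := abs_le.mp habs; linarith [this.2]
    have hqu : q ≤ p₁ + β / 2 := by
      have := abs_le.mp habs; linarith [this.1]
    apply Real.sSup_le _ hε0
    rintro r ⟨y, hy, rfl⟩
    have hout0 : outDist (binMech p₁ β ε) Q 0 =
        (1 / (1 + β * E)) * (q * (E * (1 - p₁ + β / 2)) + (1 - q) * (1 - E * (p₁ - β / 2))) := by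
      unfold outDist
      rw [Fin.sum_univ_two, h00, h10, hQ1]
      ring
    have hout1 : outDist (binMech p₁ β ε) Q 1 =
        (1 / (1 + β * E)) * (q * (1 - E * (1 - p₁ - β / 2)) + (1 - q) * (E * (p₁ + β / 2))) := by
      unfold outDist
      rw [Fin.sum_univ_two, h01, h11, hQ1]
      ring
    obtain hy' | hy' : y = 0 ∨ y = 1 := by omega
    all_goals subst hy'
    · refine leak_le 0 hy ?_ ?_ ?_
      · refine lt_max_of_lt_left ?_
        rw [h00]
        have : 0 < 1 - p₁ + β / 2 := by linarith
        positivity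
      · rw [h00, hout0]
        calc (1 / (1 + β * E)) * (E * (1 - p₁ + β / 2))
            ≤ (1 / (1 + β * E)) *
              (E * (q * (E * (1 - p₁ + β / 2)) + (1 - q) * (1 - E * (p₁ - β / 2)))) := by
              apply mul_le_mul_of_nonneg_left _ hDinv.le
              nlinarith [mul_nonneg (mul_nonneg hE0.le (sub_nonneg.2 hE1)) (sub_nonneg.2 hql)]
          _ = E * ((1 / (1 + β * E)) *
              (q * (E * (1 - p₁ + β / 2)) + (1 - q) * (1 - E * (p₁ - β / 2)))) := by ring
      · rw [h10, hout0]
        calc (1 / (1 + β * E)) * (1 - E * (p₁ - β / 2))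
            ≤ (1 / (1 + β * E)) *
              (E * (q * (E * (1 - p₁ + β / 2)) + (1 - q) * (1 - E * (p₁ - β / 2)))) := by
              apply mul_le_mul_of_nonneg_left _ hDinv.le
              nlinarith [mul_nonneg (sub_nonneg.2 hE1) (mul_nonneg hE0.le (sub_nonneg.2 hql))]
          _ = E * ((1 / (1 + β * E)) *
              (q * (E * (1 - p₁ + β / 2)) + (1 - q) * (1 - E * (p₁ - β / 2)))) := by ring
    · refine leak_le 1 hy ?_ ?_ ?_
      · refine lt_max_of_lt_right ?_
        rw [h11]
        have : 0 < p₁ + β / 2 := by linarith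
        positivity
      · rw [h01, hout1]
        calc (1 / (1 + β * E)) * (1 - E * (1 - p₁ - β / 2))
            ≤ (1 / (1 + β * E)) *
              (E * (q * (1 - E * (1 - p₁ - β / 2)) + (1 - q) * (E * (p₁ + β / 2)))) := by
              apply mul_le_mul_of_nonneg_left _ hDinv.le
              nlinarith [mul_nonneg (sub_nonneg.2 hE1) (mul_nonneg hE0.le (sub_nonneg.2 hqu))]
          _ = E * ((1 / (1 + β * E)) *
              (q * (1 - E * (1 - p₁ - β / 2)) + (1 - q) * (E * (p₁ + β / 2)))) := by ring
      · rw [h11, hout1]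
        calc (1 / (1 + β * E)) * (E * (p₁ + β / 2))
            ≤ (1 / (1 + β * E)) *
              (E * (q * (1 - E * (1 - p₁ - β / 2)) + (1 - q) * (E * (p₁ + β / 2)))) := by
              apply mul_le_mul_of_nonneg_left _ hDinv.le
              nlinarith [mul_nonneg (mul_nonneg hE0.le (sub_nonneg.2 hE1)) (sub_nonneg.2 hqu)]
          _ = E * ((1 / (1 + β * E)) *
              (q * (1 - E * (1 - p₁ - β / 2)) + (1 - q) * (E * (p₁ + β / 2)))) := by ring
end

section
/- Optimality of the binary mechanism under ℓ1-uncertainty: let 𝒳 = {x₁, x₂}, let P̂_X be full-support with p₁ = P̂_X(x₁) ≥ P̂_X(x₂) = 1−p₁, let 0 < β < 2(1−p₁), and let 0 ≤ ε ≤ −log(p₁ − β/2). Define P*_{Y|X} = (1/(1+β·e^ε)) · [[ e^ε(1−p₁+β/2), 1−e^ε(1−p₁−β/2) ], [ 1−e^ε(p₁−β/2), e^ε(p₁+β/2) ]]. Then for every sub-convex utility — i.e., every function of the form U(W) = Σ_{j∈{1,2}} μ( (W_{x₁}(y_j), W_{x₂}(y_j)) ) with μ : ℝ₊² → ℝ₊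 convex and positively homogeneous of degree 1 — the mechanism P*_{Y|X} maximizes U among all row-stochastic mechanisms W from 𝒳 to an output alphabet of size at most 2 that satisfy ε-PML with respect to every full-support distribution Q_X with ||P̂_X − Q_X||₁ ≤ β. -/
open Finset Real

lemma constraint_bound {Z : Type*} [Fintype Z] (W : Fin 2 → Z → ℝ) (hW : IsMech W)
    (Q : Fin 2 → ℝ) (hQ : FullSupport Q) (ε : ℝ) (hle : epsMin W Q ≤ ε) (z : Z) (i : Fin 2) :
    W i z ≤ Real.exp ε * outDist W Q z := by
  have hQ0 := hQ.1
  have hP0 : 0 ≤ outDist W Q z :=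
    Finset.sum_nonneg fun x _ => mul_nonneg (hQ0 x).le (hW.1 x z)
  rcases eq_or_lt_of_le hP0 with h0 | hpos
  · have hz : W i z = 0 := by
      have h := (Finset.sum_eq_zero_iff_of_nonneg
        (fun x _ => mul_nonneg (hQ0 x).le (hW.1 x z))).mp h0.symm i (Finset.mem_univ i)
      rcases mul_eq_zero.mp h with h | h
      · exact absurd h (hQ0 i).ne'
      · exact h
    rw [hz, ← h0]; simp
  · have hM : ∀ x, W x z ≤ ⨆ x, W x z := fun x => le_ciSup (Set.finite_range (fun x => W x z)).bddAbove x
    have hPM : outDist W Q z ≤ ⨆ x, W x z := by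
      calc outDist W Q z = ∑ x, Q x * W x z := rfl
        _ ≤ ∑ x, Q x * (⨆ x, W x z) :=
            Finset.sum_le_sum fun x _ => mul_le_mul_of_nonneg_left (hM x) (hQ0 x).le
        _ = ⨆ x, W x z := by rw [← Finset.sum_mul, hQ.2, one_mul]
    have hMpos : 0 < ⨆ x, W x z := lt_of_lt_of_le hpos hPM
    have hmem : leak W Q z ∈ {r : ℝ | ∃ y, 0 < outDist W Q y ∧ r = leak W Q y} :=
      ⟨z, hpos, rfl⟩
    have hbdd : BddAbove {r : ℝ | ∃ y, 0 < outDist W Q y ∧ r = leak W Q y} := by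
      apply Set.Finite.bddAbove
      apply (Set.finite_range (leak W Q)).subset
      rintro r ⟨y, _, rfl⟩; exact ⟨y, rfl⟩
    have hleak : leak W Q z ≤ ε := le_trans (le_csSup hbdd hmem) hle
    have hdiv : (⨆ x, W x z) / outDist W Q z ≤ Real.exp ε := by
      rw [← Real.exp_log (div_pos hMpos hpos)]
      exact Real.exp_le_exp.mpr hleak
    rw [div_le_iff₀ hpos] at hdiv
    exact le_trans (hM i) hdiv

lemma sublin (μ : (Fin 2 → ℝ) → ℝ) (hμconv : ConvexOn ℝ Set.univ μ)
    (hμhom : ∀ c : ℝ, 0 ≤ c → ∀ v : Fin 2 → ℝ, μ (c • v) = c * μ v)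
    (u v : Fin 2 → ℝ) (s t : ℝ) (hs : 0 ≤ s) (ht : 0 ≤ t) :
    μ (s • u + t • v) ≤ s * μ u + t * μ v := by
  rcases eq_or_lt_of_le (add_nonneg hs ht) with h0 | hpos
  · have hs0 : s = 0 := by linarith
    have ht0 : t = 0 := by linarith
    subst hs0; subst ht0
    have h00 : μ 0 = 0 := by simpa using hμhom 0 le_rfl 0
    simp [h00]
  · have hc : (0:ℝ) < s + t := hpos
    have key : s • u + t • v = (s + t) • ((s/(s+t)) • u + (t/(s+t)) • v) := by
      rw [smul_add, smul_smul, smul_smul]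
      field_simp
    rw [key, hμhom _ hc.le]
    have hconv := hμconv.2 (Set.mem_univ u) (Set.mem_univ v)
      (div_nonneg hs hc.le) (div_nonneg ht hc.le) (by field_simp)
    calc (s+t) * μ ((s/(s+t)) • u + (t/(s+t)) • v)
        ≤ (s+t) * ((s/(s+t)) * μ u + (t/(s+t)) * μ v) :=
          mul_le_mul_of_nonneg_left hconv hc.le
      _ = s * μ u + t * μ v := by field_simp

lemma keylem {Z : Type*} [Fintype Z] (μ : (Fin 2 → ℝ) → ℝ)
    (hμconv : ConvexOn ℝ Set.univ μ)
    (hμhom : ∀ c : ℝ, 0 ≤ c → ∀ v : Fin 2 → ℝ, μ (c • v) = c * μ v)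
    (c₁ c₂ : Fin 2 → ℝ) (col : Z → Fin 2 → ℝ) (s t : Z → ℝ)
    (hs : ∀ z, 0 ≤ s z) (ht : ∀ z, 0 ≤ t z)
    (hdec : ∀ z, col z = s z • c₁ + t z • c₂)
    (hSs : ∑ z, s z = 1) (hSt : ∑ z, t z = 1) :
    ∑ z, μ (col z) ≤ μ c₁ + μ c₂ := by
  calc ∑ z, μ (col z) ≤ ∑ z, (s z * μ c₁ + t z * μ c₂) := by
        apply Finset.sum_le_sum; intro z _
        rw [hdec z]; exact sublin μ hμconv hμhom c₁ c₂ (s z) (t z) (hs z) (ht z)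
    _ = (∑ z, s z) * μ c₁ + (∑ z, t z) * μ c₂ := by
        rw [Finset.sum_add_distrib, ← Finset.sum_mul, ← Finset.sum_mul]
    _ = μ c₁ + μ c₂ := by rw [hSs, hSt]; ring

set_option maxHeartbeats 1000000 in
/-- Optimality of the binary mechanism under ℓ1-uncertainty: `binMech p₁ β ε` maximizes
every sub-convex utility among all mechanisms to an output alphabet of size at most 2
satisfying `ε`-PML w.r.t. every full-support distribution in the ℓ1-ball `B_β((p₁, 1−p₁))`. -/
theorem stmt13 (p₁ : ℝ) (hp : 1 / 2 ≤ p₁) (hp1 : p₁ < 1)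
    (β : ℝ) (hβ0 : 0 < β) (hβ : β < 2 * (1 - p₁))
    (ε : ℝ) (hε0 : 0 ≤ ε) (hε : ε ≤ -Real.log (p₁ - β / 2))
    (μ : (Fin 2 → ℝ) → ℝ)
    (hμ0 : ∀ v : Fin 2 → ℝ, (∀ i, 0 ≤ v i) → 0 ≤ μ v)
    (hμconv : ConvexOn ℝ Set.univ μ)
    (hμhom : ∀ c : ℝ, 0 ≤ c → ∀ v : Fin 2 → ℝ, μ (c • v) = c * μ v) :
    ∀ (Z : Type) [Fintype Z], Fintype.card Z ≤ 2 →
      ∀ W : Fin 2 → Z → ℝ, IsMech W →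
        (∀ Q : Fin 2 → ℝ, FullSupport Q →
          (∑ x, |(![p₁, 1 - p₁]) x - Q x|) ≤ β → epsMin W Q ≤ ε) →
        ∑ z, μ (fun i => W i z) ≤ ∑ j, μ (fun i => binMech p₁ β ε i j) := by
  intro Z _ _hcard W hW hPML
  have hq0 : 0 < p₁ - β / 2 := by linarith
  have hq1 : 0 < 1 - p₁ - β / 2 := by linarith
  have hq2 : 0 < 1 - p₁ + β / 2 := by linarith
  set E := Real.exp ε with hEdef
  have hE1 : 1 ≤ E := Real.one_le_exp hε0
  have hEub : E * (p₁ - β / 2) ≤ 1 := by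
    have h1 : E ≤ (p₁ - β / 2)⁻¹ := by
      have : Real.exp ε ≤ Real.exp (-Real.log (p₁ - β / 2)) := Real.exp_le_exp.mpr hε
      rwa [Real.exp_neg, Real.exp_log hq0] at this
    calc E * (p₁ - β / 2) ≤ (p₁ - β / 2)⁻¹ * (p₁ - β / 2) :=
          mul_le_mul_of_nonneg_right h1 hq0.le
      _ = 1 := inv_mul_cancel₀ hq0.ne'
  have hD : 0 < 1 + β * E := by nlinarith
  -- constraints from the two extreme priors
  have hQm : FullSupport (![p₁ - β / 2, 1 - p₁ + β / 2]) := by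
    constructor
    · rw [Fin.forall_fin_two]
      constructor <;>
        · simp only [Matrix.cons_val_zero, Matrix.cons_val_one, Matrix.head_cons]; linarith
    · rw [Fin.sum_univ_two]
      simp only [Matrix.cons_val_zero, Matrix.cons_val_one, Matrix.head_cons]; ring
  have hQp : FullSupport (![p₁ + β / 2, 1 - p₁ - β / 2]) := by
    constructor
    · rw [Fin.forall_fin_two]
      constructor <;>
        · simp only [Matrix.cons_val_zero, Matrix.cons_val_one, Matrix.head_cons]; linarith
    · rw [Fin.sum_univ_two]
      simp only [Matrix.cons_val_zero, Matrix.cons_val_one, Matrix.head_cons]; ring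
  have hl1m : (∑ x, |(![p₁, 1 - p₁]) x - (![p₁ - β / 2, 1 - p₁ + β / 2]) x|) ≤ β := by
    rw [Fin.sum_univ_two]
    have h1 : p₁ - (p₁ - β / 2) = β / 2 := by ring
    have h2 : (1 - p₁) - (1 - p₁ + β / 2) = -(β / 2) := by ring
    simp only [Matrix.cons_val_zero, Matrix.cons_val_one, Matrix.head_cons, h1, h2, abs_neg]
    rw [abs_of_nonneg (by linarith : (0:ℝ) ≤ β / 2)]
    linarith
  have hl1p : (∑ x, |(![p₁, 1 - p₁]) x - (![p₁ + β / 2, 1 - p₁ - β / 2]) x|) ≤ β := by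
    rw [Fin.sum_univ_two]
    have h1 : p₁ - (p₁ + β / 2) = -(β / 2) := by ring
    have h2 : (1 - p₁) - (1 - p₁ - β / 2) = β / 2 := by ring
    simp only [Matrix.cons_val_zero, Matrix.cons_val_one, Matrix.head_cons, h1, h2, abs_neg]
    rw [abs_of_nonneg (by linarith : (0:ℝ) ≤ β / 2)]
    linarith
  have hodm : ∀ z, outDist W (![p₁ - β / 2, 1 - p₁ + β / 2]) z
      = (p₁ - β / 2) * W 0 z + (1 - p₁ + β / 2) * W 1 z := by
    intro z; rw [outDist, Fin.sum_univ_two]; simp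
  have hodp : ∀ z, outDist W (![p₁ + β / 2, 1 - p₁ - β / 2]) z
      = (p₁ + β / 2) * W 0 z + (1 - p₁ - β / 2) * W 1 z := by
    intro z; rw [outDist, Fin.sum_univ_two]; simp
  have hcm : ∀ z, W 0 z ≤ E * ((p₁ - β / 2) * W 0 z + (1 - p₁ + β / 2) * W 1 z) := by
    intro z
    have := constraint_bound W hW _ hQm ε (hPML _ hQm hl1m) z 0
    rwa [hodm z] at this
  have hcp : ∀ z, W 1 z ≤ E * ((p₁ + β / 2) * W 0 z + (1 - p₁ - β / 2) * W 1 z) := by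
    intro z
    have := constraint_bound W hW _ hQp ε (hPML _ hQp hl1p) z 1
    rwa [hodp z] at this
  -- the two columns of the optimal mechanism
  set c₁ : Fin 2 → ℝ := fun i => binMech p₁ β ε i 0 with hc₁
  set c₂ : Fin 2 → ℝ := fun i => binMech p₁ β ε i 1 with hc₂
  have hc₁0 : c₁ 0 = (1 / (1 + β * E)) * (E * (1 - p₁ + β / 2)) := by
    simp [hc₁, binMech, hEdef]
  have hc₁1 : c₁ 1 = (1 / (1 + β * E)) * (1 - E * (p₁ - β / 2)) := by
    simp [hc₁, binMech, hEdef]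
  have hc₂0 : c₂ 0 = (1 / (1 + β * E)) * (1 - E * (1 - p₁ - β / 2)) := by
    simp [hc₂, binMech, hEdef]
  have hc₂1 : c₂ 1 = (1 / (1 + β * E)) * (E * (p₁ + β / 2)) := by
    simp [hc₂, binMech, hEdef]
  rw [Fin.sum_univ_two]
  rcases eq_or_lt_of_le hε0 with hε0' | hεpos
  · -- ε = 0 case: all feasible columns are multiples of (1,1)
    have hE' : E = 1 := by rw [hEdef, ← hε0', Real.exp_zero]
    have hab : ∀ z, W 0 z = W 1 z := by
      intro z
      have h1 := hcm z; have h2 := hcp z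
      rw [hE', one_mul] at h1 h2
      have h3 : (1 - p₁ + β / 2) * W 0 z ≤ (1 - p₁ + β / 2) * W 1 z := by nlinarith
      have h4 : (p₁ + β / 2) * W 1 z ≤ (p₁ + β / 2) * W 0 z := by nlinarith
      have h5 : W 0 z ≤ W 1 z := le_of_mul_le_mul_left h3 hq2
      have h6 : W 1 z ≤ W 0 z := le_of_mul_le_mul_left h4 (by linarith)
      linarith
    apply keylem μ hμconv hμhom c₁ c₂ _ (fun z => (W 0 z + W 1 z) / 2)
      (fun z => (W 0 z + W 1 z) / 2)
    · intro z; have := hW.1 0 z; have := hW.1 1 z; positivity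
    · intro z; have := hW.1 0 z; have := hW.1 1 z; positivity
    · intro z
      funext i
      have habz := hab z
      fin_cases i
      · show W 0 z = (W 0 z + W 1 z) / 2 * c₁ 0 + (W 0 z + W 1 z) / 2 * c₂ 0
        rw [hc₁0, hc₂0, hE', ← habz]
        field_simp
        ring
      · show W 1 z = (W 0 z + W 1 z) / 2 * c₁ 1 + (W 0 z + W 1 z) / 2 * c₂ 1
        rw [hc₁1, hc₂1, hE', ← habz]
        field_simp
        ring
    · rw [← Finset.sum_div, Finset.sum_add_distrib, hW.2 0, hW.2 1]; norm_num
    · rw [← Finset.sum_div, Finset.sum_add_distrib, hW.2 0, hW.2 1]; norm_num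
  · -- ε > 0 case
    have hE : 1 < E := by
      rw [hEdef, show (1:ℝ) = Real.exp 0 from (Real.exp_zero).symm]
      exact Real.exp_lt_exp.mpr hεpos
    have hEne : E - 1 ≠ 0 := by linarith
    apply keylem μ hμconv hμhom c₁ c₂ _
      (fun z => (E * (p₁ + β / 2) * W 0 z - (1 - E * (1 - p₁ - β / 2)) * W 1 z) / (E - 1))
      (fun z => (E * (1 - p₁ + β / 2) * W 1 z - (1 - E * (p₁ - β / 2)) * W 0 z) / (E - 1))
    · intro z
      apply div_nonneg _ (by linarith)
      have h := hcp z
      have heq : E * (p₁ + β / 2) * W 0 z - (1 - E * (1 - p₁ - β / 2)) * W 1 z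
          = E * ((p₁ + β / 2) * W 0 z + (1 - p₁ - β / 2) * W 1 z) - W 1 z := by ring
      rw [heq]; linarith
    · intro z
      apply div_nonneg _ (by linarith)
      have h := hcm z
      have heq : E * (1 - p₁ + β / 2) * W 1 z - (1 - E * (p₁ - β / 2)) * W 0 z
          = E * ((p₁ - β / 2) * W 0 z + (1 - p₁ + β / 2) * W 1 z) - W 0 z := by ring
      rw [heq]; linarith
    · intro z
      funext i
      fin_cases i
      · show W 0 z = (E * (p₁ + β / 2) * W 0 z - (1 - E * (1 - p₁ - β / 2)) * W 1 z) / (E - 1)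
            * c₁ 0 + (E * (1 - p₁ + β / 2) * W 1 z - (1 - E * (p₁ - β / 2)) * W 0 z) / (E - 1)
            * c₂ 0
        rw [hc₁0, hc₂0]
        field_simp
        ring
      · show W 1 z = (E * (p₁ + β / 2) * W 0 z - (1 - E * (1 - p₁ - β / 2)) * W 1 z) / (E - 1)
            * c₁ 1 + (E * (1 - p₁ + β / 2) * W 1 z - (1 - E * (p₁ - β / 2)) * W 0 z) / (E - 1)
            * c₂ 1
        rw [hc₁1, hc₂1]
        field_simp
        ring
    · rw [← Finset.sum_div, Finset.sum_sub_distrib, ← Finset.mul_sum, ← Finset.mul_sum,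
        hW.2 0, hW.2 1]
      field_simp
      ring
    · rw [← Finset.sum_div, Finset.sum_sub_distrib, ← Finset.mul_sum, ← Finset.mul_sum,
        hW.2 0, hW.2 1]
      field_simp
      ring
end

section
/- Polytope characterization of mechanisms under ℓ1-uncertainty: let 𝒳 be a finite alphabet of size N, let P̂_X be full-support with 0 < β < 2·min_{x} P̂_X(x), let ε ≥ 0, and set ε' = log( e^ε / (1 + (β/2)e^ε) ). Then an N×N row-stochastic matrix [p_{ij}] (p_{ij} = P_{Y|X=x_i}(y_j)) satisfies ε-PML with respect to every full-support distribution Q_X with ||P̂_X − Q_X||₁ ≤ β if and only if for all i, i', j ∈ {1,…,N}: p_{ij} ≤ e^{ε'} · ( Σ_{l=1}^N P̂_X(x_l)·p_{lj} + (β/2)·p_{i'j} ). In particular, the set of such mechanisms is a convex polytope in [0,1]^{N×N} cut out by these linear inequalities together with row-stochasticity. -/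
open Finset Real

/-- ℓ1 perturbation bound: if `d` sums to zero with `∑|d| ≤ β` and `m ≤ q l ≤ M`,
then `∑ d l * q l ≥ (β/2)(m - M)`. -/
lemma l1_perturb {N : ℕ} (d q : Fin N → ℝ) (m M β : ℝ)
    (hsum : ∑ l, d l = 0) (habs : ∑ l, |d l| ≤ β)
    (hm : ∀ l, m ≤ q l) (hM : ∀ l, q l ≤ M) (hmM : m ≤ M) :
    β / 2 * (m - M) ≤ ∑ l, d l * q l := by
  set s : ℝ := ∑ l, max (d l) 0 with hs
  have hds : ∀ l, max (d l) 0 - max (-(d l)) 0 = d l := by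
    intro l; rcases le_total (d l) 0 with h | h
    · rw [max_eq_right h, max_eq_left (by linarith)]; ring
    · rw [max_eq_left h, max_eq_right (by linarith)]; ring
  have habsl : ∀ l, |d l| = max (d l) 0 + max (-(d l)) 0 := by
    intro l; rcases le_total (d l) 0 with h | h
    · rw [abs_of_nonpos h, max_eq_right h, max_eq_left (by linarith)]; ring
    · rw [abs_of_nonneg h, max_eq_left h, max_eq_right (by linarith)]; ring
  have hneg : ∑ l, max (-(d l)) 0 = s := by
    have h0 : ∑ l, (max (d l) 0 - max (-(d l)) 0) = 0 :=
      (Finset.sum_congr rfl fun l _ => hds l).trans hsum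
    rw [Finset.sum_sub_distrib] at h0
    rw [hs]; linarith
  have hs2 : 2 * s ≤ β := by
    have h1 : ∑ l, |d l| = (∑ l, max (d l) 0) + ∑ l, max (-(d l)) 0 := by
      rw [← Finset.sum_add_distrib]
      exact Finset.sum_congr rfl fun l _ => habsl l
    rw [hneg, ← hs] at h1
    linarith
  have hs0 : 0 ≤ s := Finset.sum_nonneg fun l _ => le_max_right _ _
  have hlow : s * m - s * M ≤ ∑ l, d l * q l := by
    have h1 : ∑ l, max (d l) 0 * m ≤ ∑ l, max (d l) 0 * q l :=
      Finset.sum_le_sum fun l _ =>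
        mul_le_mul_of_nonneg_left (hm l) (le_max_right _ _)
    have h2 : ∑ l, max (-(d l)) 0 * q l ≤ ∑ l, max (-(d l)) 0 * M :=
      Finset.sum_le_sum fun l _ =>
        mul_le_mul_of_nonneg_left (hM l) (le_max_right _ _)
    have hsplit : ∑ l, d l * q l
        = ∑ l, max (d l) 0 * q l - ∑ l, max (-(d l)) 0 * q l := by
      rw [← Finset.sum_sub_distrib]
      refine Finset.sum_congr rfl fun l _ => ?_
      rw [← sub_mul, hds l]
    have hm1 : ∑ l, max (d l) 0 * m = s * m := by
      rw [hs, Finset.sum_mul]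
    have hm2 : ∑ l, max (-(d l)) 0 * M = s * M := by
      rw [← hneg, Finset.sum_mul]
    rw [hsplit]; rw [hm1] at h1; rw [hm2] at h2; linarith
  nlinarith [mul_le_mul_of_nonpos_right hs2 (show m - M ≤ 0 by linarith)]

/-- `ε`-PML w.r.t. a positive prior is equivalent to the pointwise bound
`p i j ≤ e^ε ⟨Q, p·j⟩`. -/
lemma epsMin_le_iff_s14 {N : ℕ} [NeZero N] (p : Fin N → Fin N → ℝ)
    (hp0 : ∀ x y, 0 ≤ p x y) (Q : Fin N → ℝ) (hQ0 : ∀ x, 0 < Q x)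
    (ε : ℝ) (hε : 0 ≤ ε) :
    epsMin p Q ≤ ε ↔ ∀ i j, p i j ≤ Real.exp ε * ∑ l, Q l * p l j := by
  have hout : ∀ j, outDist p Q j = ∑ l, Q l * p l j := fun j => rfl
  constructor
  · intro h i j
    by_cases hz : ∀ x, p x j = 0
    · have : ∑ l, Q l * p l j = 0 := by
        refine Finset.sum_eq_zero fun l _ => by rw [hz l, mul_zero]
      rw [this, mul_zero, hz i]
    · push_neg at hz
      obtain ⟨x, hx⟩ := hz
      have hxpos : 0 < p x j := lt_of_le_of_ne (hp0 x j) (Ne.symm hx)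
      have hD : 0 < outDist p Q j := by
        rw [hout]
        exact Finset.sum_pos' (fun l _ => mul_nonneg (hQ0 l).le (hp0 l j))
          ⟨x, Finset.mem_univ x, mul_pos (hQ0 x) hxpos⟩
      have hsub : {r : ℝ | ∃ y, 0 < outDist p Q y ∧ r = leak p Q y}
          ⊆ Set.range (leak p Q) := by
        rintro r ⟨y, _, rfl⟩; exact ⟨y, rfl⟩
      have hbdd : BddAbove {r : ℝ | ∃ y, 0 < outDist p Q y ∧ r = leak p Q y} :=
        BddAbove.mono hsub (Set.finite_range _).bddAbove
      have hleak : leak p Q j ≤ ε :=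
        le_trans (le_csSup hbdd ⟨j, hD, rfl⟩) h
      have hMbdd : BddAbove (Set.range fun l => p l j) :=
        (Set.finite_range _).bddAbove
      have hMx : p x j ≤ ⨆ l, p l j := le_ciSup hMbdd x
      have hM0 : 0 < ⨆ l, p l j := lt_of_lt_of_le hxpos hMx
      have hdiv : (⨆ l, p l j) / outDist p Q j ≤ Real.exp ε := by
        rw [← Real.log_le_iff_le_exp (div_pos hM0 hD)]
        exact hleak
      have hMle : (⨆ l, p l j) ≤ Real.exp ε * outDist p Q j := by
        rw [div_le_iff₀ hD] at hdiv; linarith [hdiv]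
      calc p i j ≤ ⨆ l, p l j := le_ciSup hMbdd i
        _ ≤ Real.exp ε * outDist p Q j := hMle
        _ = Real.exp ε * ∑ l, Q l * p l j := by rw [hout]
  · intro h
    apply Real.sSup_le _ hε
    rintro r ⟨y, hD, rfl⟩
    have hex : ∃ x, 0 < p x y := by
      by_contra hc
      push_neg at hc
      have : outDist p Q y = 0 := by
        rw [hout]
        exact Finset.sum_eq_zero fun l _ => by
          rw [le_antisymm (hc l) (hp0 l y), mul_zero]
      linarith
    obtain ⟨x, hx⟩ := hex
    have hMbdd : BddAbove (Set.range fun l => p l y) :=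
      (Set.finite_range _).bddAbove
    have hM0 : 0 < ⨆ l, p l y := lt_of_lt_of_le hx (le_ciSup hMbdd x)
    have hMle : (⨆ l, p l y) ≤ Real.exp ε * outDist p Q y :=
      ciSup_le fun i => by rw [hout]; exact h i y
    show Real.log ((⨆ l, p l y) / outDist p Q y) ≤ ε
    rw [Real.log_le_iff_le_exp (div_pos hM0 hD), div_le_iff₀ hD]
    linarith
/-- Polytope characterization: an `N×N` row-stochastic matrix satisfies `ε`-PML w.r.t.
every full-support distribution in the ℓ1-ball `B_β(P̂_X)` iff it satisfies the linear
constraints `p_{ij} ≤ e^{ε'}(Σ_l P̂_X(x_l)p_{lj} + (β/2)p_{i'j})` for all `i, i', j`,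
where `ε' = log(e^ε / (1 + (β/2)e^ε))`. -/
theorem stmt14 {N : ℕ} [NeZero N]
    (Phat : Fin N → ℝ) (hPhat : FullSupport Phat)
    (β : ℝ) (hβ0 : 0 < β) (hβ : ∀ i, β < 2 * Phat i)
    (ε : ℝ) (hε : 0 ≤ ε)
    (p : Fin N → Fin N → ℝ) (hp : IsMech p) :
    (∀ Q : Fin N → ℝ, FullSupport Q → (∑ x, |Phat x - Q x|) ≤ β → epsMin p Q ≤ ε) ↔
      (∀ i i' j : Fin N,
        p i j ≤ Real.exp (Real.log (Real.exp ε / (1 + β / 2 * Real.exp ε))) *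
          (∑ l, Phat l * p l j + β / 2 * p i' j)) := by
  obtain ⟨hp0, hp1⟩ := hp
  obtain ⟨hPh0, hPh1⟩ := hPhat
  set E := Real.exp ε with hEdef
  have hE0 : 0 < E := Real.exp_pos ε
  have hC0 : 0 < 1 + β / 2 * E := by positivity
  have hexp : Real.exp (Real.log (E / (1 + β / 2 * E))) = E / (1 + β / 2 * E) :=
    Real.exp_log (by positivity)
  rw [show (∀ i i' j : Fin N,
        p i j ≤ Real.exp (Real.log (E / (1 + β / 2 * E))) *
          (∑ l, Phat l * p l j + β / 2 * p i' j)) ↔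
      (∀ i i' j : Fin N,
        (1 + β / 2 * E) * p i j ≤ E * (∑ l, Phat l * p l j + β / 2 * p i' j)) from
    forall_congr' fun i => forall_congr' fun i' => forall_congr' fun j => by
      rw [hexp, div_mul_eq_mul_div, le_div_iff₀ hC0, mul_comm (p i j)]]
  constructor
  · -- PML on ball ⇒ linear constraints
    intro h i i' j
    by_cases hii' : i = i'
    · subst hii'
      have hball : (∑ x, |Phat x - Phat x|) ≤ β := by simp [hβ0.le]
      have := (epsMin_le_iff_s14 p hp0 Phat hPh0 ε hε).mp
        (h Phat ⟨hPh0, hPh1⟩ hball) i j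
      have hme : ∀ l, Phat l * p l j = Phat l * p l j := fun _ => rfl
      nlinarith [hp0 i j, hE0]
    · set Q : Fin N → ℝ := fun l =>
        Phat l + ((if l = i' then β / 2 else 0) - (if l = i then β / 2 else 0)) with hQdef
      have hQpos : ∀ l, 0 < Q l := by
        intro l
        have hb1 := hβ l
        have hb2 := hPh0 l
        simp only [hQdef]
        split_ifs <;> linarith
      have hQsum : ∑ l, Q l = 1 := by
        rw [hQdef]
        rw [Finset.sum_add_distrib, Finset.sum_sub_distrib]
        simp [Finset.sum_ite_eq', hPh1]
      have hQl1 : (∑ x, |Phat x - Q x|) ≤ β := by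
        have heq : ∀ x, |Phat x - Q x|
            = (if x = i then β / 2 else 0) + (if x = i' then β / 2 else 0) := by
          intro x
          simp only [hQdef]
          split_ifs with h1 h2 h3
          · exact absurd (h2.symm.trans h1) hii'
          · rw [show Phat x - (Phat x + (β / 2 - 0)) = -(β / 2) by ring, abs_neg,
              abs_of_nonneg (by linarith)]; ring
          · rw [show Phat x - (Phat x + (0 - β / 2)) = β / 2 by ring,
              abs_of_nonneg (by linarith)]; ring
          · rw [show Phat x - (Phat x + (0 - 0)) = 0 by ring]; simp
        rw [Finset.sum_congr rfl fun x _ => heq x, Finset.sum_add_distrib]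
        simp only [Finset.sum_ite_eq', Finset.mem_univ, if_true]
        linarith
      have hkey := (epsMin_le_iff_s14 p hp0 Q hQpos ε hε).mp
        (h Q ⟨hQpos, hQsum⟩ hQl1) i j
      have hQp : ∑ l, Q l * p l j
          = ∑ l, Phat l * p l j + (β / 2 * p i' j - β / 2 * p i j) := by
        rw [hQdef]
        simp only [add_mul, sub_mul, ite_mul, zero_mul]
        rw [Finset.sum_add_distrib, Finset.sum_sub_distrib]
        simp [Finset.sum_ite_eq']
      rw [hQp] at hkey
      nlinarith [hkey]
  · -- linear constraints ⇒ PML on ball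
    intro h Q hQ hQl1
    obtain ⟨hQ0, hQ1⟩ := hQ
    rw [epsMin_le_iff_s14 p hp0 Q hQ0 ε hε]
    intro i j
    obtain ⟨a, _, ha⟩ := Finset.exists_max_image Finset.univ (fun l => p l j)
      Finset.univ_nonempty
    obtain ⟨b, _, hb⟩ := Finset.exists_min_image Finset.univ (fun l => p l j)
      Finset.univ_nonempty
    have hcon := h a b j
    set d : Fin N → ℝ := fun l => Q l - Phat l with hddef
    have hdsum : ∑ l, d l = 0 := by
      rw [hddef]; rw [Finset.sum_sub_distrib, hQ1, hPh1]; ring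
    have hdabs : ∑ l, |d l| ≤ β := by
      have : ∀ l, |d l| = |Phat l - Q l| := fun l => by
        rw [hddef]; exact abs_sub_comm _ _
      rw [Finset.sum_congr rfl fun l _ => this l]; exact hQl1
    have hdlem := l1_perturb d (fun l => p l j) (p b j) (p a j) β hdsum hdabs
      (fun l => hb l (Finset.mem_univ l)) (fun l => ha l (Finset.mem_univ l))
      (le_trans (hb a (Finset.mem_univ a)) (le_refl _))
    have hQsplit : ∑ l, Q l * p l j = ∑ l, Phat l * p l j + ∑ l, d l * p l j := by
      rw [← Finset.sum_add_distrib]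
      refine Finset.sum_congr rfl fun l _ => ?_
      rw [hddef]; ring
    rw [hQsplit]
    have hia : p i j ≤ p a j := ha i (Finset.mem_univ i)
    nlinarith [mul_le_mul_of_nonneg_left hdlem hE0.le, hcon, hia]
end

section
/- Inclusion between fixed-distribution and uncertainty-set mechanism classes: let 𝒳 be a finite alphabet, let P̂_X be full-support with 0 < β < 2·min_x P̂_X(x), let ε ≥ 0, and set ε' = log( e^ε / (1 + (β/2)e^ε) ). Then every privacy mechanism P_{Y|X} satisfying ε'-PML with respect to P̂_X also satisfies ε-PML with respect to every full-support distribution Q_X with ||P̂_X − Q_X||₁ ≤ β; that is, M(ε', P̂_X) ⊆ M(ε, B_β(P̂_X)). -/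
open Finset Real

/-- Inclusion `M(ε', P̂_X) ⊆ M(ε, B_β(P̂_X))`: any mechanism satisfying `ε'`-PML w.r.t.
the estimate `P̂_X`, where `ε' = log(e^ε / (1 + (β/2)e^ε))`, satisfies `ε`-PML w.r.t.
every full-support distribution in the ℓ1-ball of radius `β` around `P̂_X`. -/
theorem stmt15 {X Y : Type*} [Fintype X] [Fintype Y] [Nonempty X]
    (Phat : X → ℝ) (hPhat : FullSupport Phat)
    (β : ℝ) (hβ0 : 0 < β) (hβ : ∀ x, β < 2 * Phat x)
    (ε : ℝ) (hε : 0 ≤ ε)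
    (W : X → Y → ℝ) (hW : IsMech W)
    (hPML : epsMin W Phat ≤ Real.log (Real.exp ε / (1 + β / 2 * Real.exp ε))) :
    ∀ Q : X → ℝ, FullSupport Q → (∑ x, |Phat x - Q x|) ≤ β → epsMin W Q ≤ ε := by
  obtain ⟨hW0, hW1⟩ := hW
  intro Q hQ hQβ
  have hEpos : 0 < Real.exp ε := Real.exp_pos ε
  have hD : 0 < 1 + β / 2 * Real.exp ε := by positivity
  set c := Real.exp ε / (1 + β / 2 * Real.exp ε) with hc
  have hcpos : 0 < c := by positivity
  apply Real.sSup_le _ hε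
  rintro r ⟨y, hQy, rfl⟩
  have hBdd : BddAbove (Set.range fun x => W x y) := (Set.finite_range _).bddAbove
  set M := ⨆ x, W x y with hM
  have hMx : ∀ x, W x y ≤ M := fun x => le_ciSup hBdd x
  have hM0 : 0 ≤ M := le_trans (hW0 (Classical.arbitrary X) y) (hMx _)
  -- outDist W Phat y is positive
  have hPy : 0 < outDist W Phat y := by
    by_contra h
    push_neg at h
    have hterms : ∀ x ∈ Finset.univ, (0:ℝ) ≤ Phat x * W x y :=
      fun x _ => mul_nonneg (hPhat.1 x).le (hW0 x y)
    have hzero : ∀ x, W x y = 0 := by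
      intro x
      have h0 : Phat x * W x y = 0 :=
        (Finset.sum_eq_zero_iff_of_nonneg hterms).mp
          (le_antisymm h (Finset.sum_nonneg hterms)) x (Finset.mem_univ x)
      rcases mul_eq_zero.mp h0 with h' | h'
      · exact absurd h' (hPhat.1 x).ne'
      · exact h'
    have : outDist W Q y = 0 := by simp [outDist, hzero]
    linarith
  -- leakage bound w.r.t. Phat
  have hleakP : leak W Phat y ≤ Real.log c := by
    have hmem : leak W Phat y ∈ {r : ℝ | ∃ y, 0 < outDist W Phat y ∧ r = leak W Phat y} :=
      ⟨y, hPy, rfl⟩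
    have hb : BddAbove {r : ℝ | ∃ y, 0 < outDist W Phat y ∧ r = leak W Phat y} := by
      refine BddAbove.mono ?_ (Set.finite_range (leak W Phat)).bddAbove
      rintro r ⟨y', _, rfl⟩; exact ⟨y', rfl⟩
    exact le_trans (le_csSup hb hmem) hPML
  have hMc : M ≤ c * outDist W Phat y := by
    rcases eq_or_lt_of_le hM0 with h0 | hMpos
    · nlinarith
    · have hx : 0 < M / outDist W Phat y := div_pos hMpos hPy
      have hlog : Real.log (M / outDist W Phat y) ≤ Real.log c := by
        simpa [leak, ← hM] using hleakP
      have := (Real.log_le_iff_le_exp hx).mp hlog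
      rw [Real.exp_log hcpos] at this
      calc M = M / outDist W Phat y * outDist W Phat y := by field_simp
        _ ≤ c * outDist W Phat y := by nlinarith
  -- sum manipulation
  have hmax : ∀ a : ℝ, max a 0 = (a + |a|) / 2 := by
    intro a
    rcases le_total a 0 with h | h
    · rw [max_eq_right h, abs_of_nonpos h]; ring
    · rw [max_eq_left h, abs_of_nonneg h]; ring
  have hsum0 : ∑ x, (Phat x - Q x) = 0 := by
    rw [Finset.sum_sub_distrib, hPhat.2, hQ.2]; ring
  have hmaxsum : ∑ x, max (Phat x - Q x) 0 ≤ β / 2 := by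
    calc ∑ x, max (Phat x - Q x) 0 = ∑ x, ((Phat x - Q x) + |Phat x - Q x|) / 2 := by
          exact Finset.sum_congr rfl fun x _ => hmax _
      _ = (∑ x, (Phat x - Q x) + ∑ x, |Phat x - Q x|) / 2 := by
          rw [← Finset.sum_add_distrib, Finset.sum_div]
      _ ≤ β / 2 := by rw [hsum0]; linarith
  have hsum : ∑ x, (Phat x - Q x) * W x y ≤ β / 2 * M := by
    calc ∑ x, (Phat x - Q x) * W x y ≤ ∑ x, max (Phat x - Q x) 0 * M := by
          refine Finset.sum_le_sum fun x _ => ?_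
          calc (Phat x - Q x) * W x y ≤ max (Phat x - Q x) 0 * W x y :=
                mul_le_mul_of_nonneg_right (le_max_left _ _) (hW0 x y)
            _ ≤ max (Phat x - Q x) 0 * M :=
                mul_le_mul_of_nonneg_left (hMx x) (le_max_right _ _)
      _ = (∑ x, max (Phat x - Q x) 0) * M := by rw [Finset.sum_mul]
      _ ≤ β / 2 * M := mul_le_mul_of_nonneg_right hmaxsum hM0
  have hPQ : outDist W Phat y ≤ outDist W Q y + β / 2 * M := by
    have hdiff : outDist W Phat y - outDist W Q y = ∑ x, (Phat x - Q x) * W x y := by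
      rw [outDist, outDist, ← Finset.sum_sub_distrib]
      exact Finset.sum_congr rfl fun x _ => by ring
    linarith
  -- combine
  have hkey : M ≤ Real.exp ε * outDist W Q y := by
    have hMD : M * (1 + β / 2 * Real.exp ε) ≤ Real.exp ε * outDist W Phat y := by
      rw [hc, div_eq_mul_inv] at hMc
      calc M * (1 + β / 2 * Real.exp ε)
          ≤ Real.exp ε * (1 + β / 2 * Real.exp ε)⁻¹ * outDist W Phat y
            * (1 + β / 2 * Real.exp ε) := by nlinarith
        _ = Real.exp ε * outDist W Phat y := by field_simp
    nlinarith [mul_le_mul_of_nonneg_left hPQ hEpos.le]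
  rcases eq_or_lt_of_le hM0 with h0 | hMpos
  · have : leak W Q y = 0 := by simp [leak, ← hM, ← h0]
    rw [this]; exact hε
  · have hx : 0 < M / outDist W Q y := div_pos hMpos hQy
    have : M / outDist W Q y ≤ Real.exp ε := (div_le_iff₀ hQy).mpr (by linarith)
    have := (Real.log_le_iff_le_exp hx).mpr this
    simpa [leak, ← hM] using this
end
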